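/- arXiv:2412.18477 — 9 statements merged into one kernel-verified Lean document; each statement's English description precedes it below -/
import Mathlib

section
/- Let Z = (Z_1,…,Z_D) be a standard MGP random vector, Z_j = E + S_j. Then for every x = (x_1,…,x_D) ∈ [0,∞)^D, P(Z_1 > x_1, …, Z_D > x_D) = 𝔼[exp(min_{1≤j≤D}(S_j − x_j))]. In particular, P(Z_j > 0 for all j) = 𝔼[exp(min_j S_j)]. -/
open MeasureTheory ProbabilityTheory

/-- For a standard MGP random vector `Z j = E + S j`, for every
`x ∈ [0,∞)^D`, `P(∀ j, Z j > x j) = 𝔼[exp (min_j (S j - x j))]`; in particular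
`P(∀ j, Z j > 0) = 𝔼[exp (min_j S j)]`. -/
theorem stmt_1
    {Ω : Type*} [MeasureSpace Ω] [IsProbabilityMeasure (ℙ : Measure Ω)]
    {D : ℕ} (hD : 0 < D)
    (E : Ω → ℝ) (S : Ω → Fin D → ℝ)
    (hEmeas : Measurable E) (hSmeas : Measurable S)
    (hEexp : ∀ t : ℝ, 0 ≤ t → ℙ {ω | t < E ω} = ENNReal.ofReal (Real.exp (-t)))
    (hindep : IndepFun E S ℙ)
    (hSle : ∀ j, ∀ᵐ ω ∂ℙ, S ω j ≤ 0)
    (hSmax : ∀ᵐ ω ∂ℙ, (⨆ j, S ω j) = 0) :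
    (∀ x : Fin D → ℝ, (∀ j, 0 ≤ x j) →
      ℙ {ω | ∀ j, x j < E ω + S ω j}
        = ENNReal.ofReal (∫ ω, Real.exp (⨅ j, (S ω j - x j)) ∂ℙ))
    ∧ ℙ {ω | ∀ j, 0 < E ω + S ω j}
        = ENNReal.ofReal (∫ ω, Real.exp (⨅ j, S ω j) ∂ℙ) := by
  have hne : Nonempty (Fin D) := ⟨⟨0, hD⟩⟩
  have main : ∀ x : Fin D → ℝ, (∀ j, 0 ≤ x j) →
      ℙ {ω | ∀ j, x j < E ω + S ω j}
        = ENNReal.ofReal (∫ ω, Real.exp (⨅ j, (S ω j - x j)) ∂ℙ) := by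
    intro x hx
    set μ := Measure.map E ℙ with hμdef
    set ν := Measure.map S ℙ with hνdef
    haveI : IsProbabilityMeasure ν := Measure.isProbabilityMeasure_map hSmeas.aemeasurable
    have hmap : Measure.map (fun ω => (E ω, S ω)) ℙ = μ.prod ν :=
      (indepFun_iff_map_prod_eq_prod_map_map hEmeas.aemeasurable hSmeas.aemeasurable).1 hindep
    set T : (Fin D → ℝ) → ℝ := fun s => ⨅ j, (s j - x j) with hTdef
    have hTmeas : Measurable T :=
      Measurable.iInf fun j => (measurable_pi_apply j).sub measurable_const
    have hlt : ∀ (a : ℝ) (s : Fin D → ℝ), (a < T s) ↔ ∀ j, a < s j - x j := by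
      intro a s
      rw [hTdef]
      simp only
      rw [← Finset.inf'_univ_eq_ciInf]
      simp [Finset.lt_inf'_iff]
    -- T is a.e. nonpositive under ν
    have hT_nonpos : ∀ᵐ s ∂ν, T s ≤ 0 := by
      obtain ⟨j0⟩ := hne
      have hj0 : ∀ᵐ s ∂ν, s j0 ≤ 0 := by
        rw [hνdef, ae_map_iff hSmeas.aemeasurable]
        · exact hSle j0
        · exact measurableSet_le (measurable_pi_apply j0) measurable_const
      filter_upwards [hj0] with s hs
      have h1 : T s ≤ s j0 - x j0 :=
        ciInf_le (Set.Finite.bddBelow (Set.finite_range _)) j0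
      have := hx j0
      linarith
    have hA : MeasurableSet {p : ℝ × (Fin D → ℝ) | ∀ j, x j < p.1 + p.2 j} := by
      rw [Set.setOf_forall]
      exact MeasurableSet.iInter fun j =>
        measurableSet_lt measurable_const
          (measurable_fst.add ((measurable_pi_apply j).comp measurable_snd))
    have hset : {ω | ∀ j, x j < E ω + S ω j}
        = (fun ω => (E ω, S ω)) ⁻¹' {p : ℝ × (Fin D → ℝ) | ∀ j, x j < p.1 + p.2 j} := rfl
    rw [hset, ← Measure.map_apply (hEmeas.prodMk hSmeas) hA, hmap,
      Measure.prod_apply_symm hA]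
    have hslices : ∀ᵐ s ∂ν,
        μ ((fun e => (e, s)) ⁻¹' {p : ℝ × (Fin D → ℝ) | ∀ j, x j < p.1 + p.2 j})
          = ENNReal.ofReal (Real.exp (T s)) := by
      filter_upwards [hT_nonpos] with s hs
      have hseteq : (fun e : ℝ => (e, s)) ⁻¹' {p : ℝ × (Fin D → ℝ) | ∀ j, x j < p.1 + p.2 j}
          = Set.Ioi (-(T s)) := by
        ext e
        simp only [Set.mem_preimage, Set.mem_setOf_eq, Set.mem_Ioi]
        rw [neg_lt, hlt]
        exact forall_congr' fun j => by constructor <;> intro <;> linarith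
      rw [hseteq, hμdef, Measure.map_apply hEmeas measurableSet_Ioi]
      have : E ⁻¹' Set.Ioi (-(T s)) = {ω | -(T s) < E ω} := rfl
      rw [this, hEexp (-(T s)) (by linarith), neg_neg]
    rw [lintegral_congr_ae hslices]
    have hexpmeas : Measurable fun s => Real.exp (T s) := Real.measurable_exp.comp hTmeas
    have hint : Integrable (fun s => Real.exp (T s)) ν := by
      refine Integrable.mono' (integrable_const 1) hexpmeas.aestronglyMeasurable ?_
      filter_upwards [hT_nonpos] with s hs
      rw [Real.norm_eq_abs, abs_of_pos (Real.exp_pos _)]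
      exact Real.exp_le_one_iff.2 hs
    rw [← ofReal_integral_eq_lintegral_ofReal hint
      (Filter.Eventually.of_forall fun s => (Real.exp_pos _).le)]
    congr 1
    rw [hνdef, integral_map hSmeas.aemeasurable hexpmeas.aestronglyMeasurable]
  refine ⟨main, ?_⟩
  have h0 := main 0 (fun j => le_refl 0)
  simpa using h0
end

section
/- (Tail dependence coefficient χ.) Let D = 2 and let (Z_1, Z_2) be a standard MGP random pair, Z_j = E + S_j. Let x_1, x_2 ≥ 0 be such that P(Z_1 > x_1) = P(Z_2 > x_2). Then P(Z_1 > x_1 | Z_2 > x_2) = P(Z_2 > x_2 | Z_1 > x_1) = 𝔼[ min( exp(S_1)/𝔼[exp(S_1)], exp(S_2)/𝔼[exp(S_2)] ) ]; in particular this conditional probability does not depend on the choice of such x_1, x_2. -/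
open MeasureTheory ProbabilityTheory

/-- Key tail computation: if `T ≥ 0` a.e., `T` independent of `E`, and `E` is
unit-exponential, then `P(T < E) = ∫ exp (-T)`. -/
lemma tail_eq_aux {Ω : Type*} [MeasureSpace Ω] [IsProbabilityMeasure (ℙ : Measure Ω)]
    (E T : Ω → ℝ) (hE : Measurable E) (hT : Measurable T)
    (hEexp : ∀ t : ℝ, 0 ≤ t → ℙ {ω | t < E ω} = ENNReal.ofReal (Real.exp (-t)))
    (hindep : IndepFun T E ℙ) (hT0 : ∀ᵐ ω ∂ℙ, 0 ≤ T ω) :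
    ℙ {ω | T ω < E ω} = ENNReal.ofReal (∫ ω, Real.exp (-T ω) ∂ℙ) := by
  have hmap : Measure.map (fun ω => (T ω, E ω)) ℙ = (Measure.map T ℙ).prod (Measure.map E ℙ) :=
    (indepFun_iff_map_prod_eq_prod_map_map hT.aemeasurable hE.aemeasurable).mp hindep
  have hset : MeasurableSet {p : ℝ × ℝ | p.1 < p.2} :=
    measurableSet_lt measurable_fst measurable_snd
  have h1 : ℙ {ω | T ω < E ω} = ∫⁻ t, (Measure.map E ℙ) (Set.Ioi t) ∂(Measure.map T ℙ) := by
    have e : {ω | T ω < E ω} = (fun ω => (T ω, E ω)) ⁻¹' {p : ℝ × ℝ | p.1 < p.2} := rfl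
    rw [e, ← Measure.map_apply (hT.prodMk hE) hset, hmap, Measure.prod_apply hset]
    rfl
  have hTmap : ∀ᵐ t ∂(Measure.map T ℙ), 0 ≤ t :=
    (ae_map_iff hT.aemeasurable (measurableSet_Ici (a := (0:ℝ)))).mpr hT0
  have h2 : ∫⁻ t, (Measure.map E ℙ) (Set.Ioi t) ∂(Measure.map T ℙ)
      = ∫⁻ t, ENNReal.ofReal (Real.exp (-t)) ∂(Measure.map T ℙ) := by
    refine lintegral_congr_ae ?_
    filter_upwards [hTmap] with t ht
    rw [Measure.map_apply hE measurableSet_Ioi, ← hEexp t ht]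
    rfl
  have hint : Integrable (fun ω => Real.exp (-T ω)) ℙ := by
    refine Integrable.mono' (integrable_const 1) (hT.neg.exp).aestronglyMeasurable ?_
    filter_upwards [hT0] with ω hω
    rw [Real.norm_eq_abs, abs_of_pos (Real.exp_pos _)]
    exact Real.exp_le_one_iff.mpr (by linarith)
  rw [h1, h2, lintegral_map (show Measurable fun t : ℝ => ENNReal.ofReal (Real.exp (-t)) by fun_prop) hT,
    ← ofReal_integral_eq_lintegral_ofReal hint
      (Filter.Eventually.of_forall fun ω => (Real.exp_pos _).le)]

/-- Tail dependence coefficient `χ` of a standard bivariate MGP pair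
`(Z₁, Z₂) = (E + S₁, E + S₂)`: if `x₁, x₂ ≥ 0` are such that `P(Z₁ > x₁) = P(Z₂ > x₂)`,
then the two conditional probabilities `P(Z₁ > x₁ | Z₂ > x₂)` and `P(Z₂ > x₂ | Z₁ > x₁)`
are both equal to `𝔼[min (exp S₁ / 𝔼[exp S₁], exp S₂ / 𝔼[exp S₂])]`, hence do not depend
on the choice of such `x₁, x₂`. -/
theorem stmt_2
    {Ω : Type*} [MeasureSpace Ω] [IsProbabilityMeasure (ℙ : Measure Ω)]
    (E S₁ S₂ : Ω → ℝ)
    (hEmeas : Measurable E) (hS₁meas : Measurable S₁) (hS₂meas : Measurable S₂)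
    (hEexp : ∀ t : ℝ, 0 ≤ t → ℙ {ω | t < E ω} = ENNReal.ofReal (Real.exp (-t)))
    (hindep : IndepFun E (fun ω => (S₁ ω, S₂ ω)) ℙ)
    (hS₁le : ∀ᵐ ω ∂ℙ, S₁ ω ≤ 0) (hS₂le : ∀ᵐ ω ∂ℙ, S₂ ω ≤ 0)
    (hSmax : ∀ᵐ ω ∂ℙ, max (S₁ ω) (S₂ ω) = 0)
    (x₁ x₂ : ℝ) (hx₁ : 0 ≤ x₁) (hx₂ : 0 ≤ x₂)
    (hxeq : ℙ {ω | x₁ < E ω + S₁ ω} = ℙ {ω | x₂ < E ω + S₂ ω}) :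
    ℙ[{ω | x₁ < E ω + S₁ ω} | {ω | x₂ < E ω + S₂ ω}]
      = ENNReal.ofReal (∫ ω, min (Real.exp (S₁ ω) / ∫ ω', Real.exp (S₁ ω') ∂ℙ)
          (Real.exp (S₂ ω) / ∫ ω', Real.exp (S₂ ω') ∂ℙ) ∂ℙ)
    ∧ ℙ[{ω | x₂ < E ω + S₂ ω} | {ω | x₁ < E ω + S₁ ω}]
      = ENNReal.ofReal (∫ ω, min (Real.exp (S₁ ω) / ∫ ω', Real.exp (S₁ ω') ∂ℙ)
          (Real.exp (S₂ ω) / ∫ ω', Real.exp (S₂ ω') ∂ℙ) ∂ℙ) := by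
  set I₁ : ℝ := ∫ ω', Real.exp (S₁ ω') ∂ℙ with hI₁
  set I₂ : ℝ := ∫ ω', Real.exp (S₂ ω') ∂ℙ with hI₂
  have hpairmeas : Measurable fun ω => (S₁ ω, S₂ ω) := hS₁meas.prodMk hS₂meas
  -- integrability of exp(S_j)
  have hintS : ∀ (S : Ω → ℝ), Measurable S → (∀ᵐ ω ∂ℙ, S ω ≤ 0) →
      Integrable (fun ω => Real.exp (S ω)) ℙ := by
    intro S hS hSle
    refine Integrable.mono' (integrable_const 1) hS.exp.aestronglyMeasurable ?_
    filter_upwards [hSle] with ω hω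
    rw [Real.norm_eq_abs, abs_of_pos (Real.exp_pos _)]
    exact Real.exp_le_one_iff.mpr hω
  have hpos : ∀ (S : Ω → ℝ), Measurable S → (∀ᵐ ω ∂ℙ, S ω ≤ 0) →
      0 < ∫ ω, Real.exp (S ω) ∂ℙ := by
    intro S hS hSle
    rw [integral_pos_iff_support_of_nonneg_ae
      (Filter.Eventually.of_forall fun ω => (Real.exp_pos _).le) (hintS S hS hSle)]
    have : (Function.support fun ω => Real.exp (S ω)) = Set.univ :=
      Set.eq_univ_of_forall fun ω => (Real.exp_pos _).ne'
    rw [this]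
    simp
  have hI₁pos : 0 < I₁ := hpos S₁ hS₁meas hS₁le
  have hI₂pos : 0 < I₂ := hpos S₂ hS₂meas hS₂le
  -- independence of functions of the pair from E
  have hindφ : ∀ (φ : ℝ × ℝ → ℝ), Measurable φ →
      IndepFun (fun ω => φ (S₁ ω, S₂ ω)) E ℙ := fun φ hφ =>
    hindep.symm.comp hφ measurable_id
  -- generic tail formula
  have hgen : ∀ (φ : ℝ × ℝ → ℝ), Measurable φ → (∀ᵐ ω ∂ℙ, 0 ≤ φ (S₁ ω, S₂ ω)) →
      ℙ {ω | φ (S₁ ω, S₂ ω) < E ω}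
        = ENNReal.ofReal (∫ ω, Real.exp (-φ (S₁ ω, S₂ ω)) ∂ℙ) := fun φ hφ h0 =>
    tail_eq_aux E (fun ω => φ (S₁ ω, S₂ ω)) hEmeas (hφ.comp hpairmeas) hEexp
      (hindφ φ hφ) h0
  -- marginal tails
  have htail₁ : ℙ {ω | x₁ < E ω + S₁ ω} = ENNReal.ofReal (Real.exp (-x₁) * I₁) := by
    have h := hgen (fun p => x₁ - p.1) (by fun_prop) ?_
    · have hseteq : {ω | (fun p : ℝ × ℝ => x₁ - p.1) (S₁ ω, S₂ ω) < E ω}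
          = {ω | x₁ < E ω + S₁ ω} := by
        ext ω; simp [sub_lt_iff_lt_add]
      rw [hseteq] at h
      rw [h]
      congr 1
      rw [hI₁, ← integral_const_mul]
      refine integral_congr_ae (Filter.Eventually.of_forall fun ω => ?_)
      simp [neg_sub, Real.exp_sub, Real.exp_neg, div_eq_mul_inv, mul_comm]
    · filter_upwards [hS₁le] with ω hω
      show (0:ℝ) ≤ x₁ - S₁ ω
      linarith
  have htail₂ : ℙ {ω | x₂ < E ω + S₂ ω} = ENNReal.ofReal (Real.exp (-x₂) * I₂) := by
    have h := hgen (fun p => x₂ - p.2) (by fun_prop) ?_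
    · have hseteq : {ω | (fun p : ℝ × ℝ => x₂ - p.2) (S₁ ω, S₂ ω) < E ω}
          = {ω | x₂ < E ω + S₂ ω} := by
        ext ω; simp [sub_lt_iff_lt_add]
      rw [hseteq] at h
      rw [h]
      congr 1
      rw [hI₂, ← integral_const_mul]
      refine integral_congr_ae (Filter.Eventually.of_forall fun ω => ?_)
      simp [neg_sub, Real.exp_sub, Real.exp_neg, div_eq_mul_inv, mul_comm]
    · filter_upwards [hS₂le] with ω hω
      show (0:ℝ) ≤ x₂ - S₂ ω
      linarith
  -- the common value c
  set c : ℝ := Real.exp (-x₁) * I₁ with hc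
  have hcpos : 0 < c := mul_pos (Real.exp_pos _) hI₁pos
  have hceq : Real.exp (-x₂) * I₂ = c := by
    rw [htail₁, htail₂] at hxeq
    exact (ENNReal.ofReal_eq_ofReal_iff
      (mul_pos (Real.exp_pos _) hI₂pos).le (mul_pos (Real.exp_pos _) hI₁pos).le).mp hxeq.symm
  -- joint tail
  set M : ℝ := ∫ ω, min (Real.exp (S₁ ω) / I₁) (Real.exp (S₂ ω) / I₂) ∂ℙ with hM
  have hMnn : 0 ≤ M := by
    refine integral_nonneg fun ω => le_min ?_ ?_
    · positivity
    · positivity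
  have hjoint : ℙ ({ω | x₁ < E ω + S₁ ω} ∩ {ω | x₂ < E ω + S₂ ω})
      = ENNReal.ofReal (c * M) := by
    have h := hgen (fun p => max (x₁ - p.1) (x₂ - p.2)) (by fun_prop) ?_
    · have hseteq : {ω | (fun p : ℝ × ℝ => max (x₁ - p.1) (x₂ - p.2)) (S₁ ω, S₂ ω) < E ω}
          = {ω | x₁ < E ω + S₁ ω} ∩ {ω | x₂ < E ω + S₂ ω} := by
        ext ω
        simp [max_lt_iff, sub_lt_iff_lt_add, Set.mem_inter_iff]
      rw [hseteq] at h
      rw [h]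
      congr 1
      rw [hM, ← integral_const_mul]
      refine integral_congr_ae (Filter.Eventually.of_forall fun ω => ?_)
      show Real.exp (-(max (x₁ - S₁ ω) (x₂ - S₂ ω)))
        = c * min (Real.exp (S₁ ω) / I₁) (Real.exp (S₂ ω) / I₂)
      have e₁ : Real.exp (-(max (x₁ - S₁ ω) (x₂ - S₂ ω)))
          = min (Real.exp (-(x₁ - S₁ ω))) (Real.exp (-(x₂ - S₂ ω))) := by
        rcases le_total (x₁ - S₁ ω) (x₂ - S₂ ω) with hle | hle
        · rw [max_eq_right hle, min_eq_right (Real.exp_le_exp.mpr (by linarith))]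
        · rw [max_eq_left hle, min_eq_left (Real.exp_le_exp.mpr (by linarith))]
      rw [e₁]
      have e₂ : Real.exp (-(x₁ - S₁ ω)) = c * (Real.exp (S₁ ω) / I₁) := by
        rw [hc, neg_sub, Real.exp_sub, Real.exp_neg]
        field_simp
      have e₃ : Real.exp (-(x₂ - S₂ ω)) = c * (Real.exp (S₂ ω) / I₂) := by
        rw [← hceq, neg_sub, Real.exp_sub, Real.exp_neg]
        field_simp
      rw [e₂, e₃]
      rcases le_total (Real.exp (S₁ ω) / I₁) (Real.exp (S₂ ω) / I₂) with hle | hle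
      · rw [min_eq_left hle, min_eq_left (by nlinarith)]
      · rw [min_eq_right hle, min_eq_right (by nlinarith)]
    · filter_upwards [hS₁le] with ω hω
      show (0:ℝ) ≤ max (x₁ - S₁ ω) (x₂ - S₂ ω)
      refine le_trans ?_ (le_max_left _ _)
      linarith
  -- measurability of the events
  have hmA : MeasurableSet {ω | x₁ < E ω + S₁ ω} :=
    measurableSet_lt measurable_const (hEmeas.add hS₁meas)
  have hmB : MeasurableSet {ω | x₂ < E ω + S₂ ω} :=
    measurableSet_lt measurable_const (hEmeas.add hS₂meas)
  have hfin : ∀ p : ℝ, (ENNReal.ofReal p) ≠ ⊤ := fun p => ENNReal.ofReal_ne_top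
  have key : ∀ (s t : Set Ω), MeasurableSet s → ℙ s = ENNReal.ofReal c →
      ℙ (s ∩ t) = ENNReal.ofReal (c * M) → ℙ[t | s] = ENNReal.ofReal M := by
    intro s t hms hs hst
    rw [cond_apply hms, hs, hst, ENNReal.ofReal_mul hcpos.le, ← mul_assoc,
      ENNReal.inv_mul_cancel (by simp [ENNReal.ofReal_pos.mpr hcpos, (ENNReal.ofReal_pos.mpr hcpos).ne']) (hfin c),
      one_mul]
  constructor
  · exact key _ _ hmB (by rw [htail₂, hceq]) (by rw [Set.inter_comm]; exact hjoint)
  · exact key _ _ hmA (by rw [htail₁]) hjoint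
end

section
/- (Threshold stability, equal thresholds.) Let Z = (Z_1,…,Z_D) be a standard MGP random vector, Z_j = E + S_j. Then for every u ≥ 0: P(max_j Z_j > u) = exp(−u) > 0, and for every Borel set B ⊆ ℝ^D, P( (Z_1 − u, …, Z_D − u) ∈ B | max_j Z_j > u ) = P( Z ∈ B ). That is, the conditional distribution of Z − u·1 given Z ≰ u·1 equals the distribution of Z. -/
/-!
Since `max_j S_j = 0`, the event `max_j Z_j > u` is almost surely the event `E > u`, which has
probability `exp (-u)`. By memorylessness of the exponential law, conditioning on `E > u` and
shifting by `u` turns the law of `E` back into itself; independence of `E` and `S` upgrades this to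
the pair `(S, E)`, and `Z - u·1` is the image of `(S, E - u)` under `(s, e) ↦ e·1 + s`.
-/

open MeasureTheory ProbabilityTheory Set Real

lemma add_ciSup_of_finite {ι : Type*} [Finite ι] [Nonempty ι] (e : ℝ) (s : ι → ℝ) :
    ⨆ j, (e + s j) = e + ⨆ j, s j :=
  ((OrderIso.addLeft e).map_ciSup (finite_range s).bddAbove).symm

lemma measure_Ioi_eq_one_of_nonpos {μ : Measure ℝ} [IsProbabilityMeasure μ] (h0 : μ (Ioi 0) = 1)
    {t : ℝ} (ht : t ≤ 0) : μ (Ioi t) = 1 :=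
  le_antisymm prob_le_one (h0 ▸ measure_mono (Ioi_subset_Ioi ht))

lemma map_sub_restrict_Ioi_of_exp_tail (μ : Measure ℝ) [IsProbabilityMeasure μ]
    (h : ∀ t : ℝ, 0 ≤ t → μ (Ioi t) = ENNReal.ofReal (exp (-t))) {u : ℝ} (hu : 0 ≤ u) :
    (μ.restrict (Ioi u)).map (· - u) = ENNReal.ofReal (exp (-u)) • μ := by
  have h0 : μ (Ioi 0) = 1 := by simpa using h 0 le_rfl
  have hIoi (t : ℝ) : ((μ.restrict (Ioi u)).map (· - u)) (Ioi t) = μ (Ioi (max (t + u) u)) := by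
    rw [Measure.map_apply (measurable_sub_const u) measurableSet_Ioi,
      Measure.restrict_apply' measurableSet_Ioi]
    congr 1
    ext x
    simp
  refine ext_of_generate_finite _ (BorelSpace.measurable_eq.trans (borel_eq_generateFrom_Ioi ℝ))
    isPiSystem_Ioi ?_ ?_
  · rintro _ ⟨t, rfl⟩
    rw [hIoi, Measure.smul_apply, smul_eq_mul]
    rcases le_or_gt 0 t with ht | ht
    · rw [max_eq_left (by linarith), h _ (by linarith), h t ht, ← ENNReal.ofReal_mul (exp_nonneg _),
        ← exp_add]
      ring_nf
    · rw [max_eq_right (by linarith), h u hu, measure_Ioi_eq_one_of_nonpos h0 ht.le, mul_one]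
  · rw [Measure.map_apply (measurable_sub_const u) MeasurableSet.univ, preimage_univ,
      Measure.restrict_apply_univ, Measure.smul_apply, measure_univ, smul_eq_mul, mul_one, h u hu]

lemma map_prodMap_restrict_univ_prod {α β : Type*} [MeasurableSpace α] [MeasurableSpace β]
    (ν : Measure α) (μ : Measure β) [SFinite ν] [SFinite μ] {s : Set β} {f : β → β}
    (hf : Measurable f) {c : ENNReal} (h : (μ.restrict s).map f = c • μ) :
    ((ν.prod μ).restrict (univ ×ˢ s)).map (Prod.map id f) = c • ν.prod μ := by
  rw [← Measure.prod_restrict, Measure.restrict_univ, ← Measure.map_prod_map _ _ measurable_id hf,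
    Measure.map_id, h, Measure.prod_smul_right]

lemma cond_map_prodMk_sub_of_indepFun_of_exp_tail {Ω α : Type*} [MeasurableSpace Ω]
    [MeasurableSpace α] {P : Measure Ω} [IsProbabilityMeasure P] {X : Ω → α} {E : Ω → ℝ}
    (hX : Measurable X) (hE : Measurable E) (hind : IndepFun X E P)
    (hEexp : ∀ t : ℝ, 0 ≤ t → P {ω | t < E ω} = ENNReal.ofReal (exp (-t))) {u : ℝ} (hu : 0 ≤ u) :
    P[|{ω | u < E ω}].map (fun ω => (X ω, E ω - u)) = P.map (fun ω => (X ω, E ω)) := by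
  have hXE : Measurable fun ω => (X ω, E ω) := hX.prodMk hE
  have hlawE : ∀ t : ℝ, 0 ≤ t → P.map E (Ioi t) = ENNReal.ofReal (exp (-t)) := fun t ht => by
    rw [Measure.map_apply hE measurableSet_Ioi]
    exact hEexp t ht
  have := Measure.isProbabilityMeasure_map (μ := P) hE.aemeasurable
  have hrestrict : (P.restrict {ω | u < E ω}).map (fun ω => (X ω, E ω - u))
      = ENNReal.ofReal (exp (-u)) • P.map (fun ω => (X ω, E ω)) := by
    have hpre : {ω | u < E ω} = (fun ω => (X ω, E ω)) ⁻¹' (univ ×ˢ Ioi u) := by ext; simp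
    have hcomp : (fun ω => (X ω, E ω - u)) = Prod.map id (· - u) ∘ fun ω => (X ω, E ω) := rfl
    rw [hpre, hcomp, ← Measure.map_map (measurable_id.prodMap (measurable_sub_const u)) hXE,
      ← Measure.restrict_map hXE (MeasurableSet.univ.prod measurableSet_Ioi),
      (indepFun_iff_map_prod_eq_prod_map_map hX.aemeasurable hE.aemeasurable).mp hind]
    exact map_prodMap_restrict_univ_prod _ _ (measurable_sub_const u)
      (map_sub_restrict_Ioi_of_exp_tail _ hlawE hu)
  have hc : ENNReal.ofReal (exp (-u)) ≠ 0 := by simp [exp_pos]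
  rw [ProbabilityTheory.cond, Measure.map_smul, hrestrict, hEexp u hu, smul_smul,
    ENNReal.inv_mul_cancel hc ENNReal.ofReal_ne_top, one_smul]

theorem stmt_4_general
    {Ω : Type*} [MeasureSpace Ω] [IsProbabilityMeasure (ℙ : Measure Ω)]
    {D : ℕ} (hD : 0 < D)
    (E : Ω → ℝ) (S : Ω → Fin D → ℝ)
    (hEmeas : Measurable E) (hSmeas : Measurable S)
    (hEexp : ∀ t : ℝ, 0 ≤ t → ℙ {ω | t < E ω} = ENNReal.ofReal (Real.exp (-t)))
    (hindep : IndepFun E S ℙ)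
    (hSmax : ∀ᵐ ω ∂ℙ, (⨆ j, S ω j) = 0) :
    ∀ u : ℝ, 0 ≤ u →
      (ℙ {ω | u < ⨆ j, (E ω + S ω j)} = ENNReal.ofReal (Real.exp (-u))
        ∧ 0 < ℙ {ω | u < ⨆ j, (E ω + S ω j)})
      ∧ ∀ B : Set (Fin D → ℝ), MeasurableSet B →
        ℙ[{ω | (fun j => E ω + S ω j - u) ∈ B} | {ω | u < ⨆ j, (E ω + S ω j)}]
          = ℙ {ω | (fun j => E ω + S ω j) ∈ B} := by
  have : Nonempty (Fin D) := Fin.pos_iff_nonempty.mp hD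
  intro u hu
  have hT : {ω | u < ⨆ j, (E ω + S ω j)} =ᵐ[ℙ] {ω | u < E ω} := by
    filter_upwards [hSmax] with ω hω
    change (u < ⨆ j, (E ω + S ω j)) = (u < E ω)
    rw [add_ciSup_of_finite, hω, add_zero]
  have hPT : ℙ {ω | u < ⨆ j, (E ω + S ω j)} = ENNReal.ofReal (exp (-u)) :=
    (measure_congr hT).trans (hEexp u hu)
  refine ⟨⟨hPT, hPT ▸ ENNReal.ofReal_pos.2 (exp_pos _)⟩, fun B hB => ?_⟩
  have hcond : ℙ[|{ω | u < ⨆ j, (E ω + S ω j)}] = ℙ[|{ω | u < E ω}] := by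
    rw [ProbabilityTheory.cond, ProbabilityTheory.cond, measure_congr hT,
      Measure.restrict_congr_set hT]
  let Φ : (Fin D → ℝ) × ℝ → Fin D → ℝ := fun p j => p.2 + p.1 j
  have hΦ : Measurable Φ := by fun_prop
  have hshift :
      {ω | (fun j => E ω + S ω j - u) ∈ B} = (fun ω => (S ω, E ω - u)) ⁻¹' (Φ ⁻¹' B) := by
    ext ω
    simp [Φ, sub_add_eq_add_sub]
  rw [hcond, hshift, ← Measure.map_apply (by fun_prop) (hΦ hB),
    cond_map_prodMk_sub_of_indepFun_of_exp_tail hSmeas hEmeas hindep.symm hEexp hu,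
    Measure.map_apply (by fun_prop) (hΦ hB)]
  rfl

/-- Threshold stability of the standard MGP distribution at equal
thresholds: for `u ≥ 0`, `P(max_j Z_j > u) = exp (−u) > 0`, and the conditional law of
`Z − u·1` given `max_j Z_j > u` equals the law of `Z`. -/
theorem stmt_4
    {Ω : Type*} [MeasureSpace Ω] [IsProbabilityMeasure (ℙ : Measure Ω)]
    {D : ℕ} (hD : 0 < D)
    (E : Ω → ℝ) (S : Ω → Fin D → ℝ)
    (hEmeas : Measurable E) (hSmeas : Measurable S)
    (hEexp : ∀ t : ℝ, 0 ≤ t → ℙ {ω | t < E ω} = ENNReal.ofReal (Real.exp (-t)))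
    (hindep : IndepFun E S ℙ)
    (hSle : ∀ j, ∀ᵐ ω ∂ℙ, S ω j ≤ 0)
    (hSmax : ∀ᵐ ω ∂ℙ, (⨆ j, S ω j) = 0) :
    ∀ u : ℝ, 0 ≤ u →
      (ℙ {ω | u < ⨆ j, (E ω + S ω j)} = ENNReal.ofReal (Real.exp (-u))
        ∧ 0 < ℙ {ω | u < ⨆ j, (E ω + S ω j)})
      ∧ ∀ B : Set (Fin D → ℝ), MeasurableSet B →
        ℙ[{ω | (fun j => E ω + S ω j - u) ∈ B} | {ω | u < ⨆ j, (E ω + S ω j)}]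
          = ℙ {ω | (fun j => E ω + S ω j) ∈ B} :=
  stmt_4_general hD E S hEmeas hSmeas hEexp hindep hSmax
end

section
/- (Threshold stability, standard margins, general threshold.) Let Z = (Z_1,…,Z_D) be a standard MGP random vector, Z_j = E + S_j, and let u ∈ [0,∞)^D. Set Q = max_j(S_j − u_j) (so Q ≤ 0 a.s.), M = max_j(Z_j − u_j) = E + Q, and let A be the event {∃ j : Z_j > u_j} = {M > 0}. Then P(A) = 𝔼[exp(Q)] > 0, and for every t ≥ 0 and every Borel set B ⊆ ℝ^D: P( M > t and (Z − u) − M·1 ∈ B | A ) = exp(−t) · 𝔼[ exp(Q) · 1{(S − u) − Q·1 ∈ B} ] / 𝔼[exp(Q)]. Consequently, conditionally on A, M is unit-exponential, M is independent of (Z − u) − M·1, and the conditional law of (Z − u) − M·1 is B ↦ 𝔼[exp(Q)·1{(S − u) − Q·1 ∈ B}]/𝔼[exp(Q)]. -/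
open MeasureTheory ProbabilityTheory

/-- Threshold stability of the standard MGP distribution at a general
threshold `u ∈ [0,∞)^D`. With `Q = max_j (S_j − u_j)`, `M = max_j (Z_j − u_j) = E + Q`
and `A = {∃ j, Z_j > u_j} = {M > 0}`: `P(A) = 𝔼[exp Q] > 0`, and for all `t ≥ 0` and
Borel `B`, `P(M > t, (Z − u) − M·1 ∈ B | A) = exp(−t)·𝔼[exp Q · 1{(S−u)−Q·1 ∈ B}]/𝔼[exp Q]`.
Consequently, under `P(·|A)`, `M` is unit-exponential, `M` is independent of
`(Z − u) − M·1`, and the conditional law of `(Z − u) − M·1` is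
`B ↦ 𝔼[exp Q · 1{(S−u)−Q·1 ∈ B}]/𝔼[exp Q]`. -/
theorem stmt_5
    {Ω : Type*} [MeasureSpace Ω] [IsProbabilityMeasure (ℙ : Measure Ω)]
    {D : ℕ} (hD : 0 < D)
    (E : Ω → ℝ) (S : Ω → Fin D → ℝ)
    (hEmeas : Measurable E) (hSmeas : Measurable S)
    (hEexp : ∀ t : ℝ, 0 ≤ t → ℙ {ω | t < E ω} = ENNReal.ofReal (Real.exp (-t)))
    (hindep : IndepFun E S ℙ)
    (hSle : ∀ j, ∀ᵐ ω ∂ℙ, S ω j ≤ 0)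
    (hSmax : ∀ᵐ ω ∂ℙ, (⨆ j, S ω j) = 0)
    (u : Fin D → ℝ) (hu : ∀ j, 0 ≤ u j)
    (Q M : Ω → ℝ) (A : Set Ω)
    (hQ : ∀ ω, Q ω = ⨆ j, (S ω j - u j))
    (hM : ∀ ω, M ω = E ω + Q ω)
    (hA : A = {ω | 0 < M ω}) :
    (ℙ A = ENNReal.ofReal (∫ ω, Real.exp (Q ω) ∂ℙ) ∧ 0 < ℙ A)
    ∧ (∀ t : ℝ, 0 ≤ t → ∀ B : Set (Fin D → ℝ), MeasurableSet B →
        ℙ[{ω | t < M ω ∧ (fun j => (E ω + S ω j - u j) - M ω) ∈ B} | A]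
          = ENNReal.ofReal (Real.exp (-t)
              * (∫ ω in {ω | (fun j => (S ω j - u j) - Q ω) ∈ B}, Real.exp (Q ω) ∂ℙ)
              / ∫ ω, Real.exp (Q ω) ∂ℙ))
    ∧ (∀ t : ℝ, 0 ≤ t → ℙ[{ω | t < M ω} | A] = ENNReal.ofReal (Real.exp (-t)))
    ∧ IndepFun M (fun ω => fun j => (E ω + S ω j - u j) - M ω) (ℙ[|A])
    ∧ (∀ B : Set (Fin D → ℝ), MeasurableSet B →
        ℙ[{ω | (fun j => (E ω + S ω j - u j) - M ω) ∈ B} | A]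
          = ENNReal.ofReal
              ((∫ ω in {ω | (fun j => (S ω j - u j) - Q ω) ∈ B}, Real.exp (Q ω) ∂ℙ)
                / ∫ ω, Real.exp (Q ω) ∂ℙ)) := by
  have hne : Nonempty (Fin D) := ⟨⟨0, hD⟩⟩
  set q : (Fin D → ℝ) → ℝ := fun s => ⨆ j, (s j - u j) with hq_def
  have hqm : Measurable q :=
    Measurable.iSup (fun j => (measurable_pi_apply j).sub measurable_const)
  set w : (Fin D → ℝ) → (Fin D → ℝ) := fun s j => s j - u j - q s with hw_def
  have hwm : Measurable w :=
    measurable_pi_lambda _ fun j =>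
      ((measurable_pi_apply j).sub measurable_const).sub hqm
  have hQS : ∀ ω, Q ω = q (S ω) := fun ω => hQ ω
  have hQm : Measurable Q := by
    have h : Q = fun ω => q (S ω) := funext hQS
    rw [h]; exact hqm.comp hSmeas
  have hMm : Measurable M := by
    have h : M = fun ω => E ω + Q ω := funext hM
    rw [h]; exact hEmeas.add hQm
  have hAm : MeasurableSet A := by
    rw [hA]; exact measurableSet_lt measurable_const hMm
  have hVfun : ∀ ω, (fun j => (E ω + S ω j - u j) - M ω) = w (S ω) := by
    intro ω; funext j
    simp only [hw_def, hM ω, hQS ω]; ring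
  have hVfun' : ∀ ω, (fun j => (S ω j - u j) - Q ω) = w (S ω) := by
    intro ω; funext j
    simp only [hw_def, hQS ω]
  have hVm : Measurable (fun ω => w (S ω)) := hwm.comp hSmeas
  -- a.e. nonpositivity of Q
  have hQ0 : ∀ᵐ ω ∂ℙ, Q ω ≤ 0 := by
    filter_upwards [ae_all_iff.mpr hSle] with ω hω
    rw [hQ ω]
    exact ciSup_le fun j => sub_nonpos.mpr ((hω j).trans (hu j))
  have hq0 : ∀ᵐ s ∂(Measure.map S ℙ), q s ≤ 0 := by
    rw [ae_map_iff hSmeas.aemeasurable (measurableSet_le hqm measurable_const)]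
    filter_upwards [hQ0] with ω h
    rw [← hQS ω]; exact h
  -- integrability of exp Q
  have hexpint : Integrable (fun ω => Real.exp (Q ω)) ℙ := by
    refine Integrable.mono' (integrable_const 1)
      (Real.measurable_exp.comp hQm).aestronglyMeasurable ?_
    filter_upwards [hQ0] with ω h
    rw [Real.norm_eq_abs, abs_of_pos (Real.exp_pos _)]
    exact (Real.exp_le_exp.mpr h).trans_eq Real.exp_zero
  set I : ℝ := ∫ ω, Real.exp (Q ω) ∂ℙ with hI_def
  have hIpos : 0 < I := by
    rw [hI_def, integral_pos_iff_support_of_nonneg (fun ω => (Real.exp_pos _).le) hexpint]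
    have h : (Function.support fun ω => Real.exp (Q ω)) = Set.univ := by
      ext ω; simp [Function.mem_support, Real.exp_ne_zero]
    rw [h, measure_univ]; exact one_pos
  -- joint law
  haveI : IsProbabilityMeasure (Measure.map E ℙ) := Measure.isProbabilityMeasure_map hEmeas.aemeasurable
  have hmap : Measure.map (fun ω => (S ω, E ω)) ℙ = (Measure.map S ℙ).prod (Measure.map E ℙ) :=
    (indepFun_iff_map_prod_eq_prod_map_map hSmeas.aemeasurable hEmeas.aemeasurable).mp hindep.symm
  -- key computation
  have key : ∀ t : ℝ, 0 ≤ t → ∀ B : Set (Fin D → ℝ), MeasurableSet B →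
      ℙ {ω | t < M ω ∧ w (S ω) ∈ B}
        = ENNReal.ofReal (Real.exp (-t))
            * ENNReal.ofReal (∫ ω in {ω | w (S ω) ∈ B}, Real.exp (Q ω) ∂ℙ) := by
    intro t ht B hB
    set C : Set ((Fin D → ℝ) × ℝ) := {p | t < p.2 + q p.1 ∧ w p.1 ∈ B} with hC_def
    have hCm : MeasurableSet C :=
      (measurableSet_lt measurable_const (measurable_snd.add (hqm.comp measurable_fst))).inter
        ((hwm.comp measurable_fst) hB)
    have hpre : {ω | t < M ω ∧ w (S ω) ∈ B} = (fun ω => (S ω, E ω)) ⁻¹' C := by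
      ext ω
      simp only [Set.mem_setOf_eq, Set.mem_preimage, hC_def, hM ω, hQS ω]
    rw [hpre, ← Measure.map_apply (hSmeas.prodMk hEmeas) hCm, hmap, Measure.prod_apply hCm]
    have hsec : ∀ᵐ s ∂(Measure.map S ℙ),
        (Measure.map E ℙ) (Prod.mk s ⁻¹' C)
          = Set.indicator (w ⁻¹' B)
              (fun s => ENNReal.ofReal (Real.exp (-t)) * ENNReal.ofReal (Real.exp (q s))) s := by
      filter_upwards [hq0] with s hs
      by_cases hmem : w s ∈ B
      · have hsecset : Prod.mk s ⁻¹' C = Set.Ioi (t - q s) := by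
          ext e
          simp only [Set.mem_preimage, hC_def, Set.mem_setOf_eq, Set.mem_Ioi, hmem, and_true]
          exact sub_lt_iff_lt_add.symm
        rw [hsecset, Set.indicator_of_mem (show s ∈ w ⁻¹' B from hmem), Measure.map_apply hEmeas measurableSet_Ioi]
        have he : E ⁻¹' Set.Ioi (t - q s) = {ω | t - q s < E ω} := rfl
        rw [he, hEexp (t - q s) (by linarith), ← ENNReal.ofReal_mul (Real.exp_pos _).le,
          ← Real.exp_add]
        congr 2
        ring
      · have hempty : Prod.mk s ⁻¹' C = ∅ := by
          ext e; simp [hC_def, hmem]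
        rw [hempty, Set.indicator_of_notMem (show s ∉ w ⁻¹' B from hmem), measure_empty]
    have hfm : Measurable fun s : Fin D → ℝ => ENNReal.ofReal (Real.exp (q s)) :=
      (Real.measurable_exp.comp hqm).ennreal_ofReal
    rw [lintegral_congr_ae hsec, lintegral_indicator (hwm hB) _,
      lintegral_const_mul _ hfm]
    congr 1
    rw [setLIntegral_map (hwm hB) hfm hSmeas]
    have hsets : S ⁻¹' (w ⁻¹' B) = {ω | w (S ω) ∈ B} := rfl
    rw [hsets]
    have hchg : ∫⁻ ω in {ω | w (S ω) ∈ B}, ENNReal.ofReal (Real.exp (q (S ω))) ∂ℙ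
        = ∫⁻ ω in {ω | w (S ω) ∈ B}, ENNReal.ofReal (Real.exp (Q ω)) ∂ℙ :=
      lintegral_congr fun ω => by rw [hQS ω]
    rw [hchg, ← ofReal_integral_eq_lintegral_ofReal hexpint.integrableOn
      (Filter.Eventually.of_forall fun ω => (Real.exp_pos _).le)]
  -- P(A)
  have hPAeq : ℙ A = ENNReal.ofReal I := by
    have h0 := key 0 le_rfl Set.univ MeasurableSet.univ
    have hset : {ω | (0:ℝ) < M ω ∧ w (S ω) ∈ Set.univ} = A := by
      rw [hA]; ext ω; simp
    have hsetu : {ω | w (S ω) ∈ Set.univ} = Set.univ := by ext ω; simp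
    rw [hset, hsetu] at h0
    rw [h0]
    simp [hI_def]
  have hPApos : 0 < ℙ A := hPAeq ▸ ENNReal.ofReal_pos.mpr hIpos
  have hPAne : ℙ A ≠ 0 := ne_of_gt hPApos
  -- main conditional formula
  have main2 : ∀ t : ℝ, 0 ≤ t → ∀ B : Set (Fin D → ℝ), MeasurableSet B →
      ℙ[{ω | t < M ω ∧ (fun j => (E ω + S ω j - u j) - M ω) ∈ B} | A]
        = ENNReal.ofReal (Real.exp (-t)
            * (∫ ω in {ω | (fun j => (S ω j - u j) - Q ω) ∈ B}, Real.exp (Q ω) ∂ℙ) / I) := by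
    intro t ht B hB
    have hset1 : {ω | t < M ω ∧ (fun j => (E ω + S ω j - u j) - M ω) ∈ B}
        = {ω | t < M ω ∧ w (S ω) ∈ B} := by
      ext ω; rw [Set.mem_setOf_eq, Set.mem_setOf_eq, hVfun ω]
    have hset2 : {ω | (fun j => (S ω j - u j) - Q ω) ∈ B} = {ω | w (S ω) ∈ B} := by
      ext ω; rw [Set.mem_setOf_eq, Set.mem_setOf_eq, hVfun' ω]
    rw [hset1, hset2, cond_apply hAm]
    have hsub : {ω | t < M ω ∧ w (S ω) ∈ B} ⊆ A := by
      rw [hA]; intro ω hω; exact lt_of_le_of_lt ht hω.1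
    rw [Set.inter_eq_self_of_subset_right hsub, key t ht B hB, hPAeq,
      ENNReal.ofReal_div_of_pos hIpos, ENNReal.ofReal_mul (Real.exp_pos _).le,
      ENNReal.div_eq_inv_mul]
  -- marginal of M
  have main3 : ∀ t : ℝ, 0 ≤ t → ℙ[{ω | t < M ω} | A] = ENNReal.ofReal (Real.exp (-t)) := by
    intro t ht
    have h := main2 t ht Set.univ MeasurableSet.univ
    simp only [Set.mem_univ, and_true, Set.setOf_true, Measure.restrict_univ] at h
    rw [h, ← hI_def, mul_div_assoc, div_self (ne_of_gt hIpos), mul_one]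
  -- conditional law of V
  have main5 : ∀ B : Set (Fin D → ℝ), MeasurableSet B →
      ℙ[{ω | (fun j => (E ω + S ω j - u j) - M ω) ∈ B} | A]
        = ENNReal.ofReal
            ((∫ ω in {ω | (fun j => (S ω j - u j) - Q ω) ∈ B}, Real.exp (Q ω) ∂ℙ) / I) := by
    intro B hB
    have hset1 : {ω | (fun j => (E ω + S ω j - u j) - M ω) ∈ B} = {ω | w (S ω) ∈ B} := by
      ext ω; rw [Set.mem_setOf_eq, Set.mem_setOf_eq, hVfun ω]
    have hset2 : {ω | (fun j => (S ω j - u j) - Q ω) ∈ B} = {ω | w (S ω) ∈ B} := by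
      ext ω; rw [Set.mem_setOf_eq, Set.mem_setOf_eq, hVfun' ω]
    rw [hset1, hset2, cond_apply hAm]
    have hAint : A ∩ {ω | w (S ω) ∈ B} = {ω | (0:ℝ) < M ω ∧ w (S ω) ∈ B} := by
      rw [hA]; ext ω; simp [Set.mem_inter_iff, Set.mem_setOf_eq]
    rw [hAint, key 0 le_rfl B hB, hPAeq]
    simp only [neg_zero, Real.exp_zero, ENNReal.ofReal_one, one_mul]
    rw [ENNReal.ofReal_div_of_pos hIpos, ENNReal.div_eq_inv_mul]
  -- independence
  haveI : IsProbabilityMeasure (ℙ[|A]) := cond_isProbabilityMeasure hPAne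
  have hVm' : Measurable (fun ω => fun j => (E ω + S ω j - u j) - M ω) := by
    have h : (fun ω => fun j => (E ω + S ω j - u j) - M ω) = fun ω => w (S ω) :=
      funext hVfun
    rw [h]; exact hVm
  have hindep' : Indep (MeasurableSpace.comap M inferInstance)
      (MeasurableSpace.comap (fun ω => fun j => (E ω + S ω j - u j) - M ω) inferInstance)
      (ℙ[|A]) := by
    have hgen1 : (MeasurableSpace.comap M inferInstance : MeasurableSpace Ω)
        = MeasurableSpace.generateFrom (Set.preimage M '' Set.range Set.Ioi) := by
      conv_lhs => rw [BorelSpace.measurable_eq (α := ℝ), borel_eq_generateFrom_Ioi]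
      rw [MeasurableSpace.comap_generateFrom]
    refine IndepSets.indep hMm.comap_le hVm'.comap_le ?_ ?_ hgen1
      (@MeasurableSpace.generateFrom_measurableSet Ω
        (MeasurableSpace.comap (fun ω => fun j => (E ω + S ω j - u j) - M ω)
          inferInstance)).symm
      ((IndepSets_iff _ _ _).mpr ?_)
    · rintro _ ⟨_, ⟨a, rfl⟩, rfl⟩ _ ⟨_, ⟨b, rfl⟩, rfl⟩ _
      exact ⟨Set.Ioi (a ⊔ b), ⟨a ⊔ b, rfl⟩, by rw [← Set.Ioi_inter_Ioi, Set.preimage_inter]⟩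
    · intro s hs t' ht' _
      have hs' : MeasurableSet[MeasurableSpace.comap
          (fun ω => fun j => (E ω + S ω j - u j) - M ω) inferInstance] s := hs
      have ht'' : MeasurableSet[MeasurableSpace.comap
          (fun ω => fun j => (E ω + S ω j - u j) - M ω) inferInstance] t' := ht'
      exact hs'.inter ht''
    · rintro t1 t2 ⟨_, ⟨a, rfl⟩, rfl⟩ ⟨B, hB, rfl⟩
      rcases le_or_gt 0 a with ha | ha
      · have e1 : M ⁻¹' Set.Ioi a ∩ (fun ω => fun j => (E ω + S ω j - u j) - M ω) ⁻¹' B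
            = {ω | a < M ω ∧ (fun j => (E ω + S ω j - u j) - M ω) ∈ B} := rfl
        have e2 : M ⁻¹' Set.Ioi a = {ω | a < M ω} := rfl
        have e3 : (fun ω => fun j => (E ω + S ω j - u j) - M ω) ⁻¹' B
            = {ω | (fun j => (E ω + S ω j - u j) - M ω) ∈ B} := rfl
        rw [e1, e2, e3, main2 a ha B hB, main3 a ha, main5 B hB,
          mul_div_assoc, ENNReal.ofReal_mul (Real.exp_pos _).le]
      · have hTA : A ⊆ M ⁻¹' Set.Ioi a := by
          rw [hA]; intro ω hω; exact lt_trans ha hω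
        rw [cond_apply hAm, cond_apply hAm, cond_apply hAm]
        have h1 : A ∩ (M ⁻¹' Set.Ioi a ∩ (fun ω => fun j => (E ω + S ω j - u j) - M ω) ⁻¹' B)
            = A ∩ (fun ω => fun j => (E ω + S ω j - u j) - M ω) ⁻¹' B := by
          rw [← Set.inter_assoc, Set.inter_eq_self_of_subset_left hTA]
        have h2 : A ∩ M ⁻¹' Set.Ioi a = A := Set.inter_eq_self_of_subset_left hTA
        rw [h1, h2, ENNReal.inv_mul_cancel hPAne (measure_ne_top _ _), one_mul]
  exact ⟨⟨hPAeq, hPApos⟩, main2, main3, hindep', main5⟩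
end

section
/- (Threshold stability, general margins.) Let Z = (Z_1,…,Z_D) be a standard MGP random vector, Z_j = E + S_j. Let σ ∈ (0,∞)^D and ξ ∈ ℝ^D, and define Y_j = σ_j(exp(ξ_j Z_j) − 1)/ξ_j (interpreted as σ_j Z_j when ξ_j = 0). Let v ∈ [0,∞)^D satisfy σ_j + ξ_j v_j > 0 for all j, and set u_j = ξ_j^{-1} log(1 + ξ_j v_j/σ_j) ≥ 0 (interpreted as v_j/σ_j when ξ_j = 0). Then the event A = {∃ j : Y_j > v_j} equals {∃ j : Z_j > u_j} and has positive probability; on A define Z'_j = ξ_j^{-1} log(1 + ξ_j (Y_j − v_j)/(σ_j + ξ_j v_j)). Then Z'_j = Z_j − u_j on A, and conditionally on A the random variable M' = max_j Z'_j is unit-exponential and is independent of the vector Z' − M'·1. In other words, the conditional distribution of Y − v given Y ≰ v is multivariate generalized Pareto with scale vector σ + ξ·v and shape vector ξ. -/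
open MeasureTheory ProbabilityTheory

/-- The marginal transformation `z ↦ σ (exp (ξ z) − 1)/ξ`, interpreted as `σ z` when
`ξ = 0`, turning a standard MGP component into one with scale `σ` and shape `ξ`. -/
noncomputable def gpScale (σ ξ z : ℝ) : ℝ :=
  if ξ = 0 then σ * z else σ * (Real.exp (ξ * z) - 1) / ξ

/-- The threshold on the standard scale: `u = ξ⁻¹ log (1 + ξ v/σ)`, interpreted as
`v/σ` when `ξ = 0`. -/
noncomputable def gpLevel (σ ξ v : ℝ) : ℝ :=
  if ξ = 0 then v / σ else Real.log (1 + ξ * v / σ) / ξ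

/-!
The marginal transformation `gpScale σ ξ` is strictly increasing, and conjugating by it turns
`Y - v` into `Z - u` on the standard scale. Writing `T S = min_j (u j - S j) ≥ 0`, the event
`A` becomes `{T S < E}`, `M' = E - T S`, and `Z' - M'` is a function of `S` alone. As `E` is
unit-exponential and independent of `S`, memorylessness gives, for `t ≥ 0`,
`P(E - T S > t, S ∈ C, A) = e^{-t} P(S ∈ C, A)`: conditionally on `A` the residual `E - T S`
is unit-exponential and independent of `S`.
-/

open Set

theorem gpScale_zero (σ ξ : ℝ) : gpScale σ ξ 0 = 0 := by
  unfold gpScale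
  split_ifs <;> simp

theorem gpScale_strictMono {σ ξ : ℝ} (hσ : 0 < σ) : StrictMono (gpScale σ ξ) := by
  intro z₁ z₂ h
  unfold gpScale
  rcases lt_trichotomy ξ 0 with hξ | rfl | hξ
  · have he : Real.exp (ξ * z₂) < Real.exp (ξ * z₁) := Real.exp_lt_exp.2 (by nlinarith)
    simp only [hξ.ne, if_false]
    rw [div_lt_div_right_of_neg hξ]
    nlinarith
  · simpa using mul_lt_mul_of_pos_left h hσ
  · have he : Real.exp (ξ * z₁) < Real.exp (ξ * z₂) := Real.exp_lt_exp.2 (by nlinarith)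
    simp only [hξ.ne', if_false]
    rw [div_lt_div_iff_of_pos_right hξ]
    nlinarith

theorem gpScale_gpLevel {σ ξ v : ℝ} (hσ : 0 < σ) (h : 0 < σ + ξ * v) :
    gpScale σ ξ (gpLevel σ ξ v) = v := by
  unfold gpScale gpLevel
  rcases eq_or_ne ξ 0 with rfl | hξ
  · simp only [if_true]
    field_simp
  · have hpos : 0 < 1 + ξ * v / σ := by
      rw [one_add_div hσ.ne']
      positivity
    rw [if_neg hξ, if_neg hξ, mul_div_cancel₀ _ hξ, Real.exp_log hpos]
    field_simp
    ring

theorem lt_gpScale_iff {σ ξ v : ℝ} (hσ : 0 < σ) (h : 0 < σ + ξ * v) (z : ℝ) :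
    v < gpScale σ ξ z ↔ gpLevel σ ξ v < z := by
  conv_lhs => rw [← gpScale_gpLevel hσ h]
  exact (gpScale_strictMono hσ).lt_iff_lt

theorem gpLevel_nonneg {σ ξ v : ℝ} (hσ : 0 < σ) (h : 0 < σ + ξ * v) (hv : 0 ≤ v) :
    0 ≤ gpLevel σ ξ v :=
  (gpScale_strictMono hσ).le_iff_le.1 (by rwa [gpScale_zero, gpScale_gpLevel hσ h])

theorem gpLevel_gpScale_sub {σ ξ v : ℝ} (hσ : 0 < σ) (h : 0 < σ + ξ * v) (z : ℝ) :
    gpLevel (σ + ξ * v) ξ (gpScale σ ξ z - v) = z - gpLevel σ ξ v := by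
  unfold gpScale gpLevel
  rcases eq_or_ne ξ 0 with rfl | hξ
  · simp only [if_true, zero_mul, add_zero]
    field_simp
  · have harg : 1 + ξ * (σ * (Real.exp (ξ * z) - 1) / ξ - v) / (σ + ξ * v)
        = σ * Real.exp (ξ * z) / (σ + ξ * v) := by
      field_simp
      ring
    simp only [hξ, if_false]
    rw [harg, one_add_div hσ.ne', Real.log_div (by positivity) h.ne',
      Real.log_mul hσ.ne' (Real.exp_pos _).ne', Real.log_exp, Real.log_div h.ne' hσ.ne']
    field_simp
    ring

theorem indepFun_of_measure_preimage_Ioi_inter {Ω β : Type*} {mΩ : MeasurableSpace Ω}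
    [MeasurableSpace β] {μ : Measure Ω} [IsZeroOrProbabilityMeasure μ] {R : Ω → ℝ}
    {X : Ω → β} (hR : Measurable R) (hX : Measurable X)
    (h : ∀ t C, MeasurableSet C →
      μ (R ⁻¹' Ioi t ∩ X ⁻¹' C) = μ (R ⁻¹' Ioi t) * μ (X ⁻¹' C)) :
    IndepFun R X μ := by
  refine IndepSets.indep hR.comap_le hX.comap_le (p1 := preimage R '' range Ioi)
    (p2 := {s | MeasurableSet[MeasurableSpace.comap X inferInstance] s}) (isPiSystem_Ioi.comap R)
    (@MeasurableSpace.isPiSystem_measurableSet Ω (MeasurableSpace.comap X inferInstance)) ?_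
    (@MeasurableSpace.generateFrom_measurableSet Ω (.comap X inferInstance)).symm ?_
  · rw [BorelSpace.measurable_eq (α := ℝ), borel_eq_generateFrom_Ioi,
      MeasurableSpace.comap_generateFrom]
  · rw [IndepSets_iff]
    rintro _ _ ⟨_, ⟨t, rfl⟩, rfl⟩ ⟨C, hC, rfl⟩
    exact h t C hC

theorem Real.sub_ciInf {ι : Type*} [Finite ι] [Nonempty ι] (c : ℝ) (f : ι → ℝ) :
    c - ⨅ i, f i = ⨆ i, (c - f i) :=
  Antitone.map_ciInf_of_continuousAt (f := (c - ·)) (by fun_prop)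
    (fun _ _ h => sub_le_sub_left h _) (Finite.bddBelow_range f)

section Memoryless

variable {Ω β : Type*} {mΩ : MeasurableSpace Ω} [MeasurableSpace β] {μ : Measure Ω}
  {E : Ω → ℝ} {X : Ω → β} {T : β → ℝ}

theorem measure_lt_inter_preimage_eq_setLIntegral [IsFiniteMeasure μ]
    (hE : Measurable E) (hX : Measurable X)
    (hEexp : ∀ t : ℝ, 0 ≤ t → μ {ω | t < E ω} = ENNReal.ofReal (Real.exp (-t)))
    (hindep : IndepFun E X μ) (hT : Measurable T) (hT0 : ∀ᵐ ω ∂μ, 0 ≤ T (X ω))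
    {C : Set β} (hC : MeasurableSet C) :
    μ ({ω | T (X ω) < E ω} ∩ X ⁻¹' C)
      = ∫⁻ x in C, ENNReal.ofReal (Real.exp (-T x)) ∂(μ.map X) := by
  have hP : MeasurableSet {p : ℝ × β | T p.2 < p.1 ∧ p.2 ∈ C} :=
    (measurableSet_lt (hT.comp measurable_snd) measurable_fst).inter (measurable_snd hC)
  have hlaw : μ.map (fun ω => (E ω, X ω)) = (μ.map E).prod (μ.map X) :=
    (indepFun_iff_map_prod_eq_prod_map_map hE.aemeasurable hX.aemeasurable).1 hindep
  have hT0' : ∀ᵐ x ∂(μ.map X), 0 ≤ T x :=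
    (ae_map_iff hX.aemeasurable (measurableSet_le measurable_const hT)).2 hT0
  calc μ ({ω | T (X ω) < E ω} ∩ X ⁻¹' C)
      = μ.map (fun ω => (E ω, X ω)) {p | T p.2 < p.1 ∧ p.2 ∈ C} :=
        (Measure.map_apply (hE.prodMk hX) hP).symm
    _ = ∫⁻ x, C.indicator (fun x => μ.map E (Ioi (T x))) x ∂(μ.map X) := by
        rw [hlaw, Measure.prod_apply_symm hP]
        refine lintegral_congr fun x => ?_
        by_cases hx : x ∈ C <;> simp [hx, Ioi]
    _ = ∫⁻ x in C, μ.map E (Ioi (T x)) ∂(μ.map X) := lintegral_indicator hC _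
    _ = ∫⁻ x in C, ENNReal.ofReal (Real.exp (-T x)) ∂(μ.map X) := by
        refine lintegral_congr_ae ?_
        filter_upwards [ae_restrict_of_ae hT0'] with x hx
        rw [Measure.map_apply hE measurableSet_Ioi]
        exact hEexp _ hx

theorem measure_add_lt_inter_preimage [IsFiniteMeasure μ]
    (hE : Measurable E) (hX : Measurable X)
    (hEexp : ∀ t : ℝ, 0 ≤ t → μ {ω | t < E ω} = ENNReal.ofReal (Real.exp (-t)))
    (hindep : IndepFun E X μ) (hT : Measurable T) (hT0 : ∀ᵐ ω ∂μ, 0 ≤ T (X ω))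
    {t : ℝ} (ht : 0 ≤ t) {C : Set β} (hC : MeasurableSet C) :
    μ ({ω | T (X ω) + t < E ω} ∩ X ⁻¹' C)
      = ENNReal.ofReal (Real.exp (-t)) * μ ({ω | T (X ω) < E ω} ∩ X ⁻¹' C) := by
  have hTt0 : ∀ᵐ ω ∂μ, 0 ≤ T (X ω) + t := by
    filter_upwards [hT0] with ω hω
    positivity
  rw [measure_lt_inter_preimage_eq_setLIntegral hE hX hEexp hindep (hT.add_const t) hTt0 hC,
    measure_lt_inter_preimage_eq_setLIntegral hE hX hEexp hindep hT hT0 hC,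
    ← lintegral_const_mul _ (by fun_prop)]
  congr with x
  rw [← ENNReal.ofReal_mul (Real.exp_nonneg _), ← Real.exp_add, neg_add, add_comm]

theorem measure_lt_pos [IsProbabilityMeasure μ]
    (hE : Measurable E) (hX : Measurable X)
    (hEexp : ∀ t : ℝ, 0 ≤ t → μ {ω | t < E ω} = ENNReal.ofReal (Real.exp (-t)))
    (hindep : IndepFun E X μ) (hT : Measurable T) (hT0 : ∀ᵐ ω ∂μ, 0 ≤ T (X ω)) :
    0 < μ {ω | T (X ω) < E ω} := by
  have hP := measure_lt_inter_preimage_eq_setLIntegral hE hX hEexp hindep hT hT0 .univ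
  rw [preimage_univ, inter_univ, Measure.restrict_univ] at hP
  rw [hP, pos_iff_ne_zero, Ne, lintegral_eq_zero_iff (by fun_prop)]
  have : IsProbabilityMeasure (μ.map X) := Measure.isProbabilityMeasure_map hX.aemeasurable
  intro h
  obtain ⟨x, hx⟩ := h.exists
  exact (ENNReal.ofReal_pos.2 (Real.exp_pos _)).ne' hx

theorem cond_measure_lt_sub_inter_preimage [IsProbabilityMeasure μ]
    (hE : Measurable E) (hX : Measurable X)
    (hEexp : ∀ t : ℝ, 0 ≤ t → μ {ω | t < E ω} = ENNReal.ofReal (Real.exp (-t)))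
    (hindep : IndepFun E X μ) (hT : Measurable T) (hT0 : ∀ᵐ ω ∂μ, 0 ≤ T (X ω))
    {t : ℝ} (ht : 0 ≤ t) {C : Set β} (hC : MeasurableSet C) :
    μ[{ω | t < E ω - T (X ω)} ∩ X ⁻¹' C | {ω | T (X ω) < E ω}]
      = ENNReal.ofReal (Real.exp (-t)) * μ[X ⁻¹' C | {ω | T (X ω) < E ω}] := by
  have hA : MeasurableSet {ω | T (X ω) < E ω} := measurableSet_lt (hT.comp hX) hE
  have hset : {ω | T (X ω) < E ω} ∩ ({ω | t < E ω - T (X ω)} ∩ X ⁻¹' C)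
      = {ω | T (X ω) + t < E ω} ∩ X ⁻¹' C := by
    ext ω
    constructor
    · rintro ⟨-, (h : t < E ω - T (X ω)), hC⟩
      exact ⟨show T (X ω) + t < E ω by linarith, hC⟩
    · rintro ⟨(h : T (X ω) + t < E ω), hC⟩
      exact ⟨show T (X ω) < E ω by linarith, show t < E ω - T (X ω) by linarith, hC⟩
  rw [cond_apply hA, cond_apply hA, hset,
    measure_add_lt_inter_preimage hE hX hEexp hindep hT hT0 ht hC, mul_left_comm]

theorem cond_measure_lt_sub [IsProbabilityMeasure μ]
    (hE : Measurable E) (hX : Measurable X)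
    (hEexp : ∀ t : ℝ, 0 ≤ t → μ {ω | t < E ω} = ENNReal.ofReal (Real.exp (-t)))
    (hindep : IndepFun E X μ) (hT : Measurable T) (hT0 : ∀ᵐ ω ∂μ, 0 ≤ T (X ω))
    {t : ℝ} (ht : 0 ≤ t) :
    μ[{ω | t < E ω - T (X ω)} | {ω | T (X ω) < E ω}] = ENNReal.ofReal (Real.exp (-t)) := by
  have : IsProbabilityMeasure μ[|{ω | T (X ω) < E ω}] :=
    cond_isProbabilityMeasure (measure_lt_pos hE hX hEexp hindep hT hT0).ne'
  simpa using cond_measure_lt_sub_inter_preimage hE hX hEexp hindep hT hT0 ht .univ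

theorem indepFun_sub_cond [IsProbabilityMeasure μ]
    (hE : Measurable E) (hX : Measurable X)
    (hEexp : ∀ t : ℝ, 0 ≤ t → μ {ω | t < E ω} = ENNReal.ofReal (Real.exp (-t)))
    (hindep : IndepFun E X μ) (hT : Measurable T) (hT0 : ∀ᵐ ω ∂μ, 0 ≤ T (X ω)) :
    IndepFun (fun ω => E ω - T (X ω)) X μ[|{ω | T (X ω) < E ω}] := by
  set A := {ω | T (X ω) < E ω}
  have hA : MeasurableSet A := measurableSet_lt (hT.comp hX) hE
  have : IsProbabilityMeasure μ[|A] :=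
    cond_isProbabilityMeasure (measure_lt_pos hE hX hEexp hindep hT hT0).ne'
  refine indepFun_of_measure_preimage_Ioi_inter (hE.sub (hT.comp hX)) hX fun t C hC => ?_
  rcases le_or_gt 0 t with ht | ht
  · exact (cond_measure_lt_sub_inter_preimage hE hX hEexp hindep hT hT0 ht hC).trans
      (congrArg (· * _) (cond_measure_lt_sub hE hX hEexp hindep hT hT0 ht).symm)
  · have hsure : ∀ B, μ[(fun ω => E ω - T (X ω)) ⁻¹' Ioi t ∩ B | A] = μ[B | A] := by
      intro B
      have hAR : A ∩ (fun ω => E ω - T (X ω)) ⁻¹' Ioi t = A :=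
        inter_eq_left.2 fun ω (hω : T (X ω) < E ω) => show t < E ω - T (X ω) by linarith
      rw [cond_apply hA, cond_apply hA, ← inter_assoc, hAR]
    rw [hsure, ← inter_univ ((fun ω => E ω - T (X ω)) ⁻¹' Ioi t), hsure, measure_univ,
      one_mul]

end Memoryless

theorem stmt_6_general
    {Ω : Type*} [MeasureSpace Ω] [IsProbabilityMeasure (ℙ : Measure Ω)]
    {D : ℕ} (hD : 0 < D)
    (E : Ω → ℝ) (S : Ω → Fin D → ℝ)
    (hEmeas : Measurable E) (hSmeas : Measurable S)
    (hEexp : ∀ t : ℝ, 0 ≤ t → ℙ {ω | t < E ω} = ENNReal.ofReal (Real.exp (-t)))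
    (hindep : IndepFun E S ℙ)
    (hSle : ∀ j, ∀ᵐ ω ∂ℙ, S ω j ≤ 0)
    (σ ξ v u : Fin D → ℝ) (hσ : ∀ j, 0 < σ j) (hv : ∀ j, 0 ≤ v j)
    (hσξv : ∀ j, 0 < σ j + ξ j * v j)
    (hu : ∀ j, u j = gpLevel (σ j) (ξ j) (v j))
    (Y : Ω → Fin D → ℝ) (hY : ∀ ω j, Y ω j = gpScale (σ j) (ξ j) (E ω + S ω j))
    (A : Set Ω) (hA : A = {ω | ∃ j, v j < Y ω j})
    (Z' : Ω → Fin D → ℝ)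
    (hZ' : ∀ ω j, Z' ω j = gpLevel (σ j + ξ j * v j) (ξ j) (Y ω j - v j))
    (M' : Ω → ℝ) (hM' : ∀ ω, M' ω = ⨆ j, Z' ω j) :
    (∀ j, 0 ≤ u j)
    ∧ A = {ω | ∃ j, u j < E ω + S ω j}
    ∧ 0 < ℙ A
    ∧ (∀ ω ∈ A, ∀ j, Z' ω j = (E ω + S ω j) - u j)
    ∧ (∀ t : ℝ, 0 ≤ t → ℙ[{ω | t < M' ω} | A] = ENNReal.ofReal (Real.exp (-t)))
    ∧ IndepFun M' (fun ω => fun j => Z' ω j - M' ω) (ℙ[|A]) := by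
  have : Nonempty (Fin D) := ⟨⟨0, hD⟩⟩
  have hu0 (j) : 0 ≤ u j := hu j ▸ gpLevel_nonneg (hσ j) (hσξv j) (hv j)
  have hZ'eq (ω j) : Z' ω j = E ω + S ω j - u j := by
    rw [hZ', hY, hu, gpLevel_gpScale_sub (hσ j) (hσξv j)]
  have hAZ : A = {ω | ∃ j, u j < E ω + S ω j} := by
    simp only [hA, hY, hu, lt_gpScale_iff (hσ _) (hσξv _)]
  let T : (Fin D → ℝ) → ℝ := fun s => ⨅ j, (u j - s j)
  have hT : Measurable T := Measurable.iInf fun j => measurable_const.sub (measurable_pi_apply j)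
  have hT0 : ∀ᵐ ω ∂ℙ, 0 ≤ T (S ω) := by
    filter_upwards [ae_all_iff.2 hSle] with ω hω
    exact le_ciInf fun j => by linarith [hu0 j, hω j]
  have hAT : A = {ω | T (S ω) < E ω} := by
    rw [hAZ]
    ext ω
    simp only [mem_ofPred_eq, T, ciInf_lt_iff (Finite.bddBelow_range _), sub_lt_iff_lt_add]
  have hM'eq : M' = fun ω => E ω - T (S ω) := by
    funext ω
    simp only [hM', hZ'eq, ← sub_sub_eq_add_sub, ← Real.sub_ciInf, T]
  have hW : (fun ω j => Z' ω j - M' ω) = (fun s j => s j - u j + T s) ∘ S := by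
    funext ω j
    simp only [hZ'eq, hM'eq, Function.comp]
    ring
  refine ⟨hu0, hAZ, hAT ▸ measure_lt_pos hEmeas hSmeas hEexp hindep hT hT0,
    fun ω _ j => hZ'eq ω j, fun t ht => ?_, ?_⟩
  · rw [hM'eq, hAT]
    exact cond_measure_lt_sub hEmeas hSmeas hEexp hindep hT hT0 ht
  · rw [hW, hM'eq, hAT]
    exact (indepFun_sub_cond hEmeas hSmeas hEexp hindep hT hT0).comp measurable_id
      (measurable_pi_lambda _ fun j => by fun_prop)

/-- Threshold stability with general margins. Let `Z j = E + S j` be a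
standard MGP vector, `Y j = σ j (exp (ξ j * Z j) − 1)/ξ j` a general MGP vector, and let
`v ∈ [0,∞)^D` satisfy `σ j + ξ j * v j > 0`. With `u j = ξ j⁻¹ log (1 + ξ j v j/σ j) ≥ 0`,
the event `A = {∃ j, Y j > v j}` equals `{∃ j, Z j > u j}` and has positive probability;
on `A`, `Z' j = ξ j⁻¹ log (1 + ξ j (Y j − v j)/(σ j + ξ j v j))` equals `Z j − u j`, and
conditionally on `A` the maximum `M' = max_j Z' j` is unit-exponential and independent of
`Z' − M'·1`; i.e. `Y − v` given `Y ≰ v` is MGP with scale `σ + ξ·v` and shape `ξ`. -/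
theorem stmt_6
    {Ω : Type*} [MeasureSpace Ω] [IsProbabilityMeasure (ℙ : Measure Ω)]
    {D : ℕ} (hD : 0 < D)
    (E : Ω → ℝ) (S : Ω → Fin D → ℝ)
    (hEmeas : Measurable E) (hSmeas : Measurable S)
    (hEexp : ∀ t : ℝ, 0 ≤ t → ℙ {ω | t < E ω} = ENNReal.ofReal (Real.exp (-t)))
    (hindep : IndepFun E S ℙ)
    (hSle : ∀ j, ∀ᵐ ω ∂ℙ, S ω j ≤ 0)
    (hSmax : ∀ᵐ ω ∂ℙ, (⨆ j, S ω j) = 0)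
    (σ ξ v u : Fin D → ℝ) (hσ : ∀ j, 0 < σ j) (hv : ∀ j, 0 ≤ v j)
    (hσξv : ∀ j, 0 < σ j + ξ j * v j)
    (hu : ∀ j, u j = gpLevel (σ j) (ξ j) (v j))
    (Y : Ω → Fin D → ℝ) (hY : ∀ ω j, Y ω j = gpScale (σ j) (ξ j) (E ω + S ω j))
    (A : Set Ω) (hA : A = {ω | ∃ j, v j < Y ω j})
    (Z' : Ω → Fin D → ℝ)
    (hZ' : ∀ ω j, Z' ω j = gpLevel (σ j + ξ j * v j) (ξ j) (Y ω j - v j))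
    (M' : Ω → ℝ) (hM' : ∀ ω, M' ω = ⨆ j, Z' ω j) :
    (∀ j, 0 ≤ u j)
    ∧ A = {ω | ∃ j, u j < E ω + S ω j}
    ∧ 0 < ℙ A
    ∧ (∀ ω ∈ A, ∀ j, Z' ω j = (E ω + S ω j) - u j)
    ∧ (∀ t : ℝ, 0 ≤ t → ℙ[{ω | t < M' ω} | A] = ENNReal.ofReal (Real.exp (-t)))
    ∧ IndepFun M' (fun ω => fun j => Z' ω j - M' ω) (ℙ[|A]) :=
  stmt_6_general hD E S hEmeas hSmeas hEexp hindep hSle σ ξ v u hσ hv hσξv hu Y hY A hA Z' hZ' M'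
    hM'
end

section
/- (Sub-vectors.) Let Z = (Z_1,…,Z_D) be a standard MGP random vector, Z_j = E + S_j, and let J be a nonempty subset of {1,…,D}. Set Q_J = max_{j∈J} S_j (so Q_J ≤ 0 a.s.) and M_J = max_{j∈J} Z_j = E + Q_J, and let A_J be the event {∃ j ∈ J : Z_j > 0} = {M_J > 0}. Then P(A_J) = 𝔼[exp(Q_J)] > 0, and for every t ≥ 0 and Borel B ⊆ ℝ^J: P( M_J > t and (Z_j − M_J)_{j∈J} ∈ B | A_J ) = exp(−t) · 𝔼[ exp(Q_J) · 1{(S_j − Q_J)_{j∈J} ∈ B} ] / 𝔼[exp(Q_J)]. Consequently, conditionally on A_J, the sub-vector (Z_j)_{j∈J} is again a standard MGP vector: M_J is unit-exponential and independent of (Z_j − M_J)_{j∈J}. -/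
open MeasureTheory ProbabilityTheory Set

lemma mgp_key {Ω : Type*} [MeasureSpace Ω] [IsProbabilityMeasure (ℙ : Measure Ω)]
    {D : ℕ}
    (E : Ω → ℝ) (S : Ω → Fin D → ℝ)
    (hEmeas : Measurable E) (hSmeas : Measurable S)
    (hEexp : ∀ t : ℝ, 0 ≤ t → ℙ {ω | t < E ω} = ENNReal.ofReal (Real.exp (-t)))
    (hindep : IndepFun E S ℙ)
    (q : (Fin D → ℝ) → ℝ) (hq : Measurable q)
    (hqle : ∀ᵐ ω ∂ℙ, q (S ω) ≤ 0)
    (t : ℝ) (ht : 0 ≤ t) (C : Set (Fin D → ℝ)) (hC : MeasurableSet C) :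
    ℙ {ω | t < E ω + q (S ω) ∧ S ω ∈ C}
      = ENNReal.ofReal (Real.exp (-t) * ∫ ω in S ⁻¹' C, Real.exp (q (S ω)) ∂ℙ) := by
  have hmap : (Measure.map (fun ω => (E ω, S ω)) ℙ) = ((Measure.map E ℙ)).prod ((Measure.map S ℙ)) :=
    (indepFun_iff_map_prod_eq_prod_map_map hEmeas.aemeasurable hSmeas.aemeasurable).mp hindep
  set T : Set (ℝ × (Fin D → ℝ)) := {p | t < p.1 + q p.2 ∧ p.2 ∈ C} with hT_def
  have hT : MeasurableSet T :=
    (measurableSet_lt measurable_const (measurable_fst.add (hq.comp measurable_snd))).inter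
      (measurable_snd hC)
  have hνle : ∀ᵐ x ∂((Measure.map S ℙ)), q x ≤ 0 :=
    (ae_map_iff hSmeas.aemeasurable (measurableSet_le hq measurable_const)).mpr hqle
  have h1 : ℙ {ω | t < E ω + q (S ω) ∧ S ω ∈ C} = (((Measure.map E ℙ)).prod ((Measure.map S ℙ))) T := by
    rw [← hmap, Measure.map_apply (hEmeas.prodMk hSmeas) hT]
    rfl
  rw [h1, Measure.prod_apply_symm hT]
  have h2 : ∀ᵐ x ∂((Measure.map S ℙ)),
      ((Measure.map E ℙ)) ((fun e => (e, x)) ⁻¹' T)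
        = C.indicator (fun x => ENNReal.ofReal (Real.exp (-t) * Real.exp (q x))) x := by
    filter_upwards [hνle] with x hx
    by_cases hxC : x ∈ C
    · have hpre : (fun e => (e, x)) ⁻¹' T = Set.Ioi (t - q x) := by
        ext e; simp [hT_def, hxC, sub_lt_iff_lt_add, Set.mem_Ioi]
      rw [hpre, Set.indicator_of_mem hxC,
        Measure.map_apply hEmeas measurableSet_Ioi]
      have h0 : (0:ℝ) ≤ t - q x := by linarith
      have := hEexp (t - q x) h0
      have hset : E ⁻¹' Set.Ioi (t - q x) = {ω | t - q x < E ω} := by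
        ext ω; simp [Set.mem_Ioi]
      rw [hset, this, neg_sub, ← Real.exp_add]
      ring_nf
    · have hpre : (fun e => (e, x)) ⁻¹' T = ∅ := by
        ext e; simp [hT_def, hxC]
      rw [hpre, Set.indicator_of_notMem hxC, measure_empty]
  rw [lintegral_congr_ae h2, lintegral_indicator hC]
  haveI : IsProbabilityMeasure ((Measure.map S ℙ)) := Measure.isProbabilityMeasure_map hSmeas.aemeasurable
  have hint : Integrable (fun x => Real.exp (-t) * Real.exp (q x)) (((Measure.map S ℙ)).restrict C) := by
    refine Integrable.mono' (integrable_const 1)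
      ((measurable_const.mul (Real.measurable_exp.comp hq)).aestronglyMeasurable) ?_
    refine ae_restrict_of_ae ?_
    filter_upwards [hνle] with x hx
    rw [Real.norm_eq_abs, abs_of_nonneg (by positivity)]
    calc Real.exp (-t) * Real.exp (q x) = Real.exp (-t + q x) := (Real.exp_add _ _).symm
    _ ≤ Real.exp 0 := Real.exp_le_exp.mpr (by linarith)
    _ = 1 := Real.exp_zero
  rw [← ofReal_integral_eq_lintegral_ofReal hint
    (ae_restrict_of_ae (Filter.Eventually.of_forall fun x => by positivity)),
    integral_const_mul,
    setIntegral_map (f := fun a => Real.exp (q a)) hC (Real.measurable_exp.comp hq).aestronglyMeasurable hSmeas.aemeasurable]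

/-- Sub-vectors of a standard MGP vector. For nonempty `J ⊆ {1,…,D}`,
with `Q_J = max_{j∈J} S j`, `M_J = max_{j∈J} Z j = E + Q_J` and
`A_J = {∃ j ∈ J, Z j > 0} = {M_J > 0}`: `P(A_J) = 𝔼[exp Q_J] > 0`, and for all `t ≥ 0` and
Borel `B ⊆ ℝ^J`,
`P(M_J > t, (Z_j − M_J)_{j∈J} ∈ B | A_J) = exp(−t)·𝔼[exp Q_J · 1{(S_j − Q_J)_{j∈J} ∈ B}]/𝔼[exp Q_J]`.
Consequently, conditionally on `A_J`, `(Z_j)_{j∈J}` is again standard MGP: `M_J` is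
unit-exponential and independent of `(Z_j − M_J)_{j∈J}`. -/
theorem stmt_7
    {Ω : Type*} [MeasureSpace Ω] [IsProbabilityMeasure (ℙ : Measure Ω)]
    {D : ℕ} (hD : 0 < D)
    (E : Ω → ℝ) (S : Ω → Fin D → ℝ)
    (hEmeas : Measurable E) (hSmeas : Measurable S)
    (hEexp : ∀ t : ℝ, 0 ≤ t → ℙ {ω | t < E ω} = ENNReal.ofReal (Real.exp (-t)))
    (hindep : IndepFun E S ℙ)
    (hSle : ∀ j, ∀ᵐ ω ∂ℙ, S ω j ≤ 0)
    (hSmax : ∀ᵐ ω ∂ℙ, (⨆ j, S ω j) = 0)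
    (J : Finset (Fin D)) (hJ : J.Nonempty)
    (Q M : Ω → ℝ) (A : Set Ω)
    (hQ : ∀ ω, Q ω = J.sup' hJ (fun j => S ω j))
    (hM : ∀ ω, M ω = E ω + Q ω)
    (hA : A = {ω | 0 < M ω}) :
    (ℙ A = ENNReal.ofReal (∫ ω, Real.exp (Q ω) ∂ℙ) ∧ 0 < ℙ A)
    ∧ (∀ t : ℝ, 0 ≤ t → ∀ B : Set (J → ℝ), MeasurableSet B →
        ℙ[{ω | t < M ω ∧ (fun j : J => (E ω + S ω j) - M ω) ∈ B} | A]
          = ENNReal.ofReal (Real.exp (-t)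
              * (∫ ω in {ω | (fun j : J => S ω j - Q ω) ∈ B}, Real.exp (Q ω) ∂ℙ)
              / ∫ ω, Real.exp (Q ω) ∂ℙ))
    ∧ (∀ t : ℝ, 0 ≤ t → ℙ[{ω | t < M ω} | A] = ENNReal.ofReal (Real.exp (-t)))
    ∧ IndepFun M (fun ω => fun j : J => (E ω + S ω j) - M ω) (ℙ[|A]) := by
  classical
  -- the max functional
  set q : (Fin D → ℝ) → ℝ := fun s => J.sup' hJ (fun j => s j) with hq_def
  have hq : Measurable q := by
    have h1 := Finset.measurable_sup' (s := J) hJ (f := fun j (s : Fin D → ℝ) => s j)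
      (fun j _ => measurable_pi_apply j)
    have h2 : q = J.sup' hJ (fun j (s : Fin D → ℝ) => s j) := by
      funext s; rw [Finset.sup'_apply]
    rwa [h2]
  have hQfun : Q = fun ω => q (S ω) := funext hQ
  have hMfun : M = fun ω => E ω + q (S ω) := by
    funext ω; rw [hM ω, hQ ω]
  have hqle : ∀ᵐ ω ∂ℙ, q (S ω) ≤ 0 := by
    filter_upwards [ae_all_iff.mpr hSle] with ω h
    exact Finset.sup'_le hJ _ fun j _ => h j
  -- the residual functional
  set g : (Fin D → ℝ) → (J → ℝ) := fun s => fun j : J => s (j : Fin D) - q s with hg_def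
  have hg : Measurable g :=
    measurable_pi_lambda _ fun j => (measurable_pi_apply _).sub hq
  have key := fun (t : ℝ) (ht : 0 ≤ t) (C : Set (Fin D → ℝ)) (hC : MeasurableSet C) =>
    mgp_key E S hEmeas hSmeas hEexp hindep q hq hqle t ht C hC
  -- basic facts
  have hexpSM : Measurable fun ω => Real.exp (q (S ω)) :=
    Real.measurable_exp.comp (hq.comp hSmeas)
  have hIint : Integrable (fun ω => Real.exp (q (S ω))) ℙ := by
    refine Integrable.mono' (integrable_const 1) hexpSM.aestronglyMeasurable ?_
    filter_upwards [hqle] with ω h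
    rw [Real.norm_eq_abs, abs_of_pos (Real.exp_pos _)]
    calc Real.exp (q (S ω)) ≤ Real.exp 0 := Real.exp_le_exp.mpr h
    _ = 1 := Real.exp_zero
  set I : ℝ := ∫ ω, Real.exp (q (S ω)) ∂ℙ with hI_def
  have hIpos : 0 < I := by
    rw [hI_def, integral_pos_iff_support_of_nonneg (fun ω => (Real.exp_pos _).le) hIint]
    have hs : Function.support (fun ω => Real.exp (q (S ω))) = Set.univ :=
      Set.eq_univ_of_forall fun ω => (Real.exp_pos _).ne'
    rw [hs]; simp
  have hIQ : (∫ ω, Real.exp (Q ω) ∂ℙ) = I := by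
    rw [hQfun]
  have hMmeas : Measurable M := by rw [hMfun]; exact hEmeas.add (hq.comp hSmeas)
  have hAmeas : MeasurableSet A := hA ▸ measurableSet_lt measurable_const hMmeas
  -- P(A)
  have hPA : ℙ A = ENNReal.ofReal I := by
    have hAset : A = {ω | 0 < E ω + q (S ω) ∧ S ω ∈ (Set.univ : Set (Fin D → ℝ))} := by
      rw [hA, hMfun]; ext ω; simp
    rw [hAset, key 0 le_rfl Set.univ MeasurableSet.univ]
    simp [hI_def]
  have hPAne : ℙ A ≠ 0 := by
    rw [hPA]; exact (ENNReal.ofReal_pos.mpr hIpos).ne'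
  -- core conditional formula
  have hGS : (fun ω => fun j : J => (E ω + S ω j) - M ω) = fun ω => g (S ω) := by
    funext ω j
    rw [hM ω, hQ ω]; simp only [hg_def, hq_def]; ring
  have core : ∀ t : ℝ, 0 ≤ t → ∀ B : Set (J → ℝ), MeasurableSet B →
      ℙ[(M ⁻¹' Set.Ioi t ∩ (fun ω => g (S ω)) ⁻¹' B) | A]
        = ENNReal.ofReal (Real.exp (-t)
            * (∫ ω in S ⁻¹' (g ⁻¹' B), Real.exp (q (S ω)) ∂ℙ) / I) := by
    intro t ht B hB
    have hEv : M ⁻¹' Set.Ioi t ∩ (fun ω => g (S ω)) ⁻¹' B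
        = {ω | t < E ω + q (S ω) ∧ S ω ∈ g ⁻¹' B} := by
      rw [hMfun]; ext ω
      simp [Set.mem_Ioi, Set.mem_preimage, Set.mem_setOf_eq, and_comm]
    have hsub : M ⁻¹' Set.Ioi t ∩ (fun ω => g (S ω)) ⁻¹' B ⊆ A := by
      rw [hEv, hA, hMfun]
      intro ω h
      exact lt_of_le_of_lt ht h.1
    rw [cond_apply hAmeas, Set.inter_eq_self_of_subset_right hsub, hEv,
      key t ht (g ⁻¹' B) (hg hB), hPA,
      ENNReal.ofReal_div_of_pos hIpos, ENNReal.div_eq_inv_mul]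
  refine ⟨⟨by rw [hIQ]; exact hPA, hPA ▸ ENNReal.ofReal_pos.mpr hIpos⟩, ?_, ?_, ?_⟩
  · -- part 2
    intro t ht B hB
    have hEv : {ω | t < M ω ∧ (fun j : J => (E ω + S ω j) - M ω) ∈ B}
        = M ⁻¹' Set.Ioi t ∩ (fun ω => g (S ω)) ⁻¹' B := by
      ext ω
      have := congrFun hGS ω
      simp only [Set.mem_setOf_eq, Set.mem_inter_iff, Set.mem_preimage, Set.mem_Ioi, this]
    have hIB : (∫ ω in {ω | (fun j : J => S ω j - Q ω) ∈ B}, Real.exp (Q ω) ∂ℙ)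
        = ∫ ω in S ⁻¹' (g ⁻¹' B), Real.exp (q (S ω)) ∂ℙ := by
      rw [hQfun]
      exact rfl
    rw [hEv, core t ht B hB, hIB, hIQ]
  · -- part 3
    intro t ht
    have hEv : {ω | t < M ω} = M ⁻¹' Set.Ioi t ∩ (fun ω => g (S ω)) ⁻¹' Set.univ := by
      ext ω; simp [Set.mem_Ioi]
    rw [hEv, core t ht Set.univ MeasurableSet.univ]
    simp only [Set.preimage_univ, Measure.restrict_univ, ← hI_def]
    rw [mul_div_assoc, div_self hIpos.ne', mul_one]
  · -- part 4: independence
    haveI : IsProbabilityMeasure (ℙ[|A]) := cond_isProbabilityMeasure hPAne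
    rw [hGS, IndepFun_iff_Indep]
    have hGmeas : Measurable (fun ω => g (S ω)) := hg.comp hSmeas
    refine IndepSets.indep
      (p1 := {s : Set Ω | ∃ u ∈ Set.range (Set.Ioi (α := ℝ)), M ⁻¹' u = s})
      (p2 := {s : Set Ω | ∃ u ∈ {u : Set ({ x // x ∈ J } → ℝ) | MeasurableSet u},
        (fun ω => g (S ω)) ⁻¹' u = s})
      hMmeas.comap_le hGmeas.comap_le
      ((isPiSystem_Ioi (α := ℝ)).comap M)
      ((MeasurableSpace.isPiSystem_measurableSet (α := ({ x // x ∈ J } → ℝ))).comap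
        (fun ω => g (S ω)))
      ?_ ?_ ?_
    · rw [(BorelSpace.measurable_eq (α := ℝ)), borel_eq_generateFrom_Ioi,
        MeasurableSpace.comap_generateFrom]
      rfl
    · rw [show {s : Set Ω | ∃ u ∈ {u : Set ({ x // x ∈ J } → ℝ) | MeasurableSet u},
          (fun ω => g (S ω)) ⁻¹' u = s}
          = Set.preimage (fun ω => g (S ω)) '' {u : Set ({ x // x ∈ J } → ℝ) | MeasurableSet u}
          from rfl]
      rw [← MeasurableSpace.comap_generateFrom, MeasurableSpace.generateFrom_measurableSet]
    · rw [IndepSets_iff]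
      rintro s1 s2 ⟨u1, ⟨t, rfl⟩, rfl⟩ ⟨B, hB, rfl⟩
      have hB' : MeasurableSet B := hB
      -- the conditional probability of the G-event
      have hGB : ℙ[((fun ω => g (S ω)) ⁻¹' B) | A]
          = ENNReal.ofReal ((∫ ω in S ⁻¹' (g ⁻¹' B), Real.exp (q (S ω)) ∂ℙ) / I) := by
        have h0 := core 0 le_rfl B hB'
        have hset : A ∩ ((fun ω => g (S ω)) ⁻¹' B)
            = A ∩ (M ⁻¹' Set.Ioi 0 ∩ (fun ω => g (S ω)) ⁻¹' B) := by
          rw [hA]; ext ω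
          simp only [Set.mem_inter_iff, Set.mem_setOf_eq, Set.mem_preimage, Set.mem_Ioi]
          tauto
        calc ℙ[((fun ω => g (S ω)) ⁻¹' B) | A]
            = (ℙ A)⁻¹ * ℙ (A ∩ ((fun ω => g (S ω)) ⁻¹' B)) := cond_apply hAmeas ℙ _
          _ = (ℙ A)⁻¹ * ℙ (A ∩ (M ⁻¹' Set.Ioi 0 ∩ (fun ω => g (S ω)) ⁻¹' B)) := by rw [hset]
          _ = ℙ[(M ⁻¹' Set.Ioi 0 ∩ (fun ω => g (S ω)) ⁻¹' B) | A] := (cond_apply hAmeas ℙ _).symm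
          _ = ENNReal.ofReal ((Real.exp (-0)
                * ∫ ω in S ⁻¹' (g ⁻¹' B), Real.exp (q (S ω)) ∂ℙ) / I) := h0
          _ = ENNReal.ofReal ((∫ ω in S ⁻¹' (g ⁻¹' B), Real.exp (q (S ω)) ∂ℙ) / I) := by
              norm_num
      by_cases ht : 0 ≤ t
      · have h3 : ℙ[(M ⁻¹' Set.Ioi t) | A] = ENNReal.ofReal (Real.exp (-t)) := by
          have h4 := core t ht Set.univ MeasurableSet.univ
          simp only [Set.preimage_univ, Set.inter_univ] at h4
          rw [h4]
          simp only [Measure.restrict_univ, ← hI_def]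
          rw [mul_div_assoc, div_self hIpos.ne', mul_one]
        rw [core t ht B hB', hGB, h3, ← ENNReal.ofReal_mul (Real.exp_nonneg _), mul_div_assoc]
      · push_neg at ht
        have h1 : A ∩ (M ⁻¹' Set.Ioi t ∩ (fun ω => g (S ω)) ⁻¹' B)
            = A ∩ ((fun ω => g (S ω)) ⁻¹' B) := by
          rw [hA]; ext ω
          simp only [Set.mem_inter_iff, Set.mem_setOf_eq, Set.mem_preimage, Set.mem_Ioi]
          constructor
          · rintro ⟨h, _, hb⟩; exact ⟨h, hb⟩
          · rintro ⟨h, hb⟩; exact ⟨h, lt_trans ht h, hb⟩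
        have h2 : A ∩ M ⁻¹' Set.Ioi t = A := by
          rw [hA]; ext ω
          simp only [Set.mem_inter_iff, Set.mem_setOf_eq, Set.mem_preimage, Set.mem_Ioi]
          exact ⟨fun h => h.1, fun h => ⟨h, lt_trans ht h⟩⟩
        rw [cond_apply hAmeas ℙ, cond_apply hAmeas ℙ, cond_apply hAmeas ℙ, h1, h2,
          ENNReal.inv_mul_cancel hPAne (measure_ne_top _ _), one_mul]
end

section
/- (From exponent measures to MGP distributions.) Let Λ be an exponent measure on unit-exponential scale on ℝ^D and let L = {x ∈ ℝ^D : max_j x_j > 0}. Then: (a) Λ({x : x_j > 0}) = 1 for every j = 1,…,D; (b) 1 ≤ Λ(L) ≤ D, so the normalized restriction P_Z(B) = Λ(B ∩ L)/Λ(L) is a probability measure on ℝ^D; (c) P_Z({x : max_j x_j > t}) = exp(−t) for every t ≥ 0; (d) for every t ≥ 0 and every Borel set A ⊆ ℝ^D, P_Z({x : max_j x_j > t and x − (max_j x_j)·1 ∈ A}) = exp(−t) · P_Z({x : x − (max_j x_j)·1 ∈ A}), i.e. under P_Z the maximum coordinate is unit-exponential and independent of the vector of deviations from the maximum; (e) P_Z({x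 : x_j > 0}) = 1/Λ(L) for every j, so these probabilities are equal across j. -/
open MeasureTheory ProbabilityTheory
open scoped ENNReal

/-- The L-shaped region `L = {x ∈ ℝ^D : max_j x_j > 0}`. -/
def Lregion (D : ℕ) : Set (Fin D → ℝ) := {x | 0 < ⨆ j, x j}

/-- From exponent measures to MGP distributions. Let `Λ` be an
exponent measure on unit-exponential scale on `ℝ^D` (finite on `{max_j x_j > u}`,
normalized by `Λ {x_j ≥ 0} = 1`, homogeneous: `Λ(B + t·1) = exp(−t) Λ B`). Then
(a) `Λ {x_j > 0} = 1` for all `j`; (b) `1 ≤ Λ L ≤ D`, so the normalized restriction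
`P_Z = Λ(· ∩ L)/Λ L` is a probability measure; (c) `P_Z {max_j x_j > t} = exp (-t)`
for `t ≥ 0`; (d) under `P_Z` the maximum coordinate is unit-exponential and independent
of the vector of deviations from the maximum; (e) `P_Z {x_j > 0} = 1/Λ L` for all `j`. -/
theorem stmt_10
    {D : ℕ} (hD : 0 < D)
    (Λ : Measure (Fin D → ℝ))
    (hfin : ∀ u : ℝ, Λ {x | u < ⨆ j, x j} < ⊤)
    (hnorm : ∀ j, Λ {x | 0 ≤ x j} = 1)
    (hhomo : ∀ (t : ℝ) (B : Set (Fin D → ℝ)), MeasurableSet B →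
      Λ ((fun x : Fin D → ℝ => fun j => x j - t) ⁻¹' B)
        = ENNReal.ofReal (Real.exp (-t)) * Λ B) :
    (∀ j, Λ {x | 0 < x j} = 1)
    ∧ (1 ≤ Λ (Lregion D) ∧ Λ (Lregion D) ≤ (D : ℝ≥0∞))
    ∧ IsProbabilityMeasure ((Λ (Lregion D))⁻¹ • Λ.restrict (Lregion D))
    ∧ (∀ t : ℝ, 0 ≤ t →
        Λ ({x | t < ⨆ j, x j} ∩ Lregion D) / Λ (Lregion D)
          = ENNReal.ofReal (Real.exp (-t)))
    ∧ (∀ t : ℝ, 0 ≤ t → ∀ A : Set (Fin D → ℝ), MeasurableSet A →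
        Λ (({x | t < ⨆ j, x j} ∩ {x | (fun j => x j - ⨆ k, x k) ∈ A}) ∩ Lregion D)
            / Λ (Lregion D)
          = ENNReal.ofReal (Real.exp (-t))
              * (Λ ({x | (fun j => x j - ⨆ k, x k) ∈ A} ∩ Lregion D) / Λ (Lregion D)))
    ∧ (∀ j, Λ ({x | 0 < x j} ∩ Lregion D) / Λ (Lregion D) = (Λ (Lregion D))⁻¹) := by
  have hne : Nonempty (Fin D) := ⟨⟨0, hD⟩⟩
  have hsup_cont : Continuous fun x : Fin D → ℝ => ⨆ j, x j := by
    have h : Continuous fun x : Fin D → ℝ =>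
        Finset.univ.sup' Finset.univ_nonempty (fun j => x j) :=
      Continuous.finset_sup'_apply Finset.univ_nonempty (fun i _ => continuous_apply i)
    simpa [Finset.sup'_univ_eq_ciSup] using h
  have hsup_meas : Measurable fun x : Fin D → ℝ => ⨆ j, x j := hsup_cont.measurable
  have hle : ∀ (x : Fin D → ℝ) (j : Fin D), x j ≤ ⨆ k, x k := fun x j =>
    le_ciSup (Set.Finite.bddAbove (Set.finite_range x)) j
  have hshift : ∀ (x : Fin D → ℝ) (t : ℝ), (⨆ j, (x j - t)) = (⨆ j, x j) - t := by
    intro x t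
    apply le_antisymm
    · exact ciSup_le fun j => sub_le_sub_right (hle x j) t
    · rw [sub_le_iff_le_add]
      refine ciSup_le fun j => ?_
      have := le_ciSup (Set.Finite.bddAbove (Set.finite_range fun j => x j - t)) j
      linarith
  have hLmeas : MeasurableSet (Lregion D) := measurableSet_lt measurable_const hsup_meas
  have hLfin : Λ (Lregion D) ≠ ⊤ := (hfin 0).ne
  have hslab : ∀ (t : ℝ) (j : Fin D), Λ {x | t ≤ x j} = ENNReal.ofReal (Real.exp (-t)) := by
    intro t j
    have hB : MeasurableSet {x : Fin D → ℝ | 0 ≤ x j} :=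
      measurableSet_le measurable_const (measurable_pi_apply j)
    have h := hhomo t _ hB
    have hpre : (fun x : Fin D → ℝ => fun j => x j - t) ⁻¹' {x | 0 ≤ x j}
        = {x : Fin D → ℝ | t ≤ x j} := by
      ext x; simp [sub_nonneg]
    rw [hpre, hnorm j, mul_one] at h
    exact h
  have ha : ∀ j, Λ {x | 0 < x j} = 1 := by
    intro j
    refine le_antisymm ?_ ?_
    · calc Λ {x | 0 < x j} ≤ Λ {x | 0 ≤ x j} :=
            measure_mono (Set.setOf_subset_setOf.2 fun x => le_of_lt)
        _ = 1 := hnorm j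
    · have key : ∀ t : ℝ, 0 < t → ENNReal.ofReal (Real.exp (-t)) ≤ Λ {x | 0 < x j} := by
        intro t ht
        rw [← hslab t j]
        exact measure_mono fun x hx => lt_of_lt_of_le ht hx
      have h1 : Filter.Tendsto (fun n : ℕ => (1 / (n + 1) : ℝ)) Filter.atTop (nhds 0) :=
        tendsto_one_div_add_atTop_nhds_zero_nat
      have h1n : Filter.Tendsto (fun n : ℕ => -(1 / (n + 1) : ℝ)) Filter.atTop (nhds 0) := by
        simpa using h1.neg
      have h2 := (Real.continuous_exp.tendsto 0).comp h1n
      simp only [Function.comp_def, neg_zero, Real.exp_zero] at h2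
      have h3 := (ENNReal.continuous_ofReal.tendsto 1).comp h2
      simp only [Function.comp_def, ENNReal.ofReal_one] at h3
      exact le_of_tendsto' h3 fun n => key _ (by positivity)
  have hb1 : 1 ≤ Λ (Lregion D) := by
    have h : Λ {x : Fin D → ℝ | 0 < x ⟨0, hD⟩} ≤ Λ (Lregion D) :=
      measure_mono fun x hx => lt_of_lt_of_le hx (hle x _)
    rwa [ha] at h
  have hb2 : Λ (Lregion D) ≤ (D : ℝ≥0∞) := by
    have hsub : Lregion D ⊆ ⋃ j, {x : Fin D → ℝ | 0 < x j} := by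
      intro x hx
      by_contra h
      simp only [Set.mem_iUnion, Set.mem_setOf_eq, not_exists, not_lt] at h
      exact absurd hx (not_lt.2 (ciSup_le h))
    calc Λ (Lregion D) ≤ ∑ j, Λ {x : Fin D → ℝ | 0 < x j} :=
          (measure_mono hsub).trans (measure_iUnion_fintype_le Λ _)
      _ = (D : ℝ≥0∞) := by simp [ha]
  have hLne : Λ (Lregion D) ≠ 0 := fun h => by simp [h] at hb1
  have hprob : IsProbabilityMeasure ((Λ (Lregion D))⁻¹ • Λ.restrict (Lregion D)) := by
    constructor
    rw [Measure.smul_apply, Measure.restrict_apply_univ, smul_eq_mul,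
      ENNReal.inv_mul_cancel hLne hLfin]
  have hmax : ∀ t : ℝ,
      Λ {x | t < ⨆ j, x j} = ENNReal.ofReal (Real.exp (-t)) * Λ (Lregion D) := by
    intro t
    have h := hhomo t (Lregion D) hLmeas
    have hpre : (fun x : Fin D → ℝ => fun j => x j - t) ⁻¹' (Lregion D)
        = {x : Fin D → ℝ | t < ⨆ j, x j} := by
      ext x
      simp only [Lregion, Set.mem_preimage, Set.mem_setOf_eq, hshift x t]
      constructor <;> intro <;> linarith
    rw [hpre] at h
    exact h
  have hsubL : ∀ t : ℝ, 0 ≤ t → {x : Fin D → ℝ | t < ⨆ j, x j} ⊆ Lregion D :=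
    fun t ht x hx => lt_of_le_of_lt ht hx
  have hc : ∀ t : ℝ, 0 ≤ t →
      Λ ({x | t < ⨆ j, x j} ∩ Lregion D) / Λ (Lregion D)
        = ENNReal.ofReal (Real.exp (-t)) := by
    intro t ht
    rw [Set.inter_eq_self_of_subset_left (hsubL t ht), hmax t, mul_div_assoc,
      ENNReal.div_self hLne hLfin, mul_one]
  have hdevmeas : Measurable fun x : Fin D → ℝ => (fun j => x j - ⨆ k, x k) :=
    measurable_pi_lambda _ fun j => (measurable_pi_apply j).sub hsup_meas
  have hd : ∀ t : ℝ, 0 ≤ t → ∀ A : Set (Fin D → ℝ), MeasurableSet A →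
      Λ (({x | t < ⨆ j, x j} ∩ {x | (fun j => x j - ⨆ k, x k) ∈ A}) ∩ Lregion D)
          / Λ (Lregion D)
        = ENNReal.ofReal (Real.exp (-t))
            * (Λ ({x | (fun j => x j - ⨆ k, x k) ∈ A} ∩ Lregion D) / Λ (Lregion D)) := by
    intro t ht A hA
    have hBmeas : MeasurableSet ({x : Fin D → ℝ | (fun j => x j - ⨆ k, x k) ∈ A} ∩ Lregion D) :=
      (hdevmeas hA).inter hLmeas
    have h := hhomo t _ hBmeas
    have hdev : ∀ x : Fin D → ℝ,
        (fun j => (x j - t) - ⨆ k, (x k - t)) = fun j => x j - ⨆ k, x k := by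
      intro x
      funext j
      rw [hshift x t]
      ring
    have hpre : (fun x : Fin D → ℝ => fun j => x j - t) ⁻¹'
        ({x : Fin D → ℝ | (fun j => x j - ⨆ k, x k) ∈ A} ∩ Lregion D)
        = {x : Fin D → ℝ | t < ⨆ j, x j} ∩ {x | (fun j => x j - ⨆ k, x k) ∈ A} := by
      ext x
      simp only [Set.mem_preimage, Set.mem_inter_iff, Set.mem_setOf_eq, Lregion,
        hshift x t]
      rw [show (fun j => x j - t - ((⨆ k, x k) - t)) = fun j => x j - ⨆ k, x k from
        funext fun j => by ring]
      constructor
      · rintro ⟨h1, h2⟩; exact ⟨by linarith, h1⟩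
      · rintro ⟨h1, h2⟩; exact ⟨h2, by linarith⟩
    rw [hpre] at h
    have heq : ({x : Fin D → ℝ | t < ⨆ j, x j} ∩ {x | (fun j => x j - ⨆ k, x k) ∈ A})
        ∩ Lregion D
        = {x : Fin D → ℝ | t < ⨆ j, x j} ∩ {x | (fun j => x j - ⨆ k, x k) ∈ A} :=
      Set.inter_eq_left.2 fun x hx => hsubL t ht hx.1
    rw [heq, h, mul_div_assoc]
  have he : ∀ j, Λ ({x | 0 < x j} ∩ Lregion D) / Λ (Lregion D) = (Λ (Lregion D))⁻¹ := by
    intro j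
    have heq : {x : Fin D → ℝ | 0 < x j} ∩ Lregion D = {x : Fin D → ℝ | 0 < x j} :=
      Set.inter_eq_left.2 fun x hx => lt_of_lt_of_le hx (hle x j)
    rw [heq, ha j, one_div]
  exact ⟨ha, ⟨hb1, hb2⟩, hprob, hc, hd, he⟩
end

section
/- (From MGP distributions to exponent measures.) Let Z = (Z_1,…,Z_D) be a standard MGP random vector, Z_j = E + S_j, and assume the margins are balanced: 𝔼[exp(S_j)] = m for all j = 1,…,D, for some m ∈ (0,1]. Define the Borel measure Λ on ℝ^D by Λ(B) = (1/m) ∫_{−∞}^{∞} P(t·1 + S ∈ B) exp(−t) dt. Then: (a) Λ({x : x_j > 0}) = 1 for every j; (b) Λ(B + u·1) = exp(−u)·Λ(B) for every u ∈ ℝ and Borel B; (c) Λ(L) = 1/m, where L = {x ∈ ℝ^D : max_j x_j > 0}; (d) Λ(B) = Λ(L) · P(Z ∈ B) for every Borel set B ⊆ L. In particular Λ is an exponent measure on unit-exponential scale whose normalized restriction to L is the law of Z. -/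
/-!
Up to the factor `1/m`, `Λ` is the image of `e^{-t} dt ⊗ law(S)` under `(t, s) ↦ t·1 + s`.
Translation invariance of Lebesgue measure gives the scaling `Λ(B + u·1) = e^{-u} Λ(B)`, and
Tonelli turns `Λ{x_j > 0}` into `(1/m) 𝔼[e^{S_j}] = 1`. Since `max_j S_j = 0` almost surely,
`t·1 + S ∈ L` exactly when `t > 0`; this gives `Λ(L) = 1/m`, and for `B ⊆ L` only `t > 0`
contributes, where `e^{-t} dt` is the law of `E`, so independence of `E` and `S` identifies the
integral with `ℙ(E·1 + S ∈ B)`.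
-/

open MeasureTheory ProbabilityTheory
open scoped ENNReal

open Set

lemma lintegral_exp_neg_Ioi (a : ℝ) :
    ∫⁻ t in Ioi a, ENNReal.ofReal (Real.exp (-t)) = ENNReal.ofReal (Real.exp (-a)) := by
  rw [← ofReal_integral_eq_lintegral_ofReal (integrableOn_exp_neg_Ioi a)
    (ae_of_all _ fun t => (Real.exp_pos _).le), integral_exp_neg_Ioi]

lemma lintegral_comp_sub_mul_exp_neg (g : ℝ → ℝ≥0∞) (u : ℝ) :
    ∫⁻ t, g (t - u) * ENNReal.ofReal (Real.exp (-t))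
      = ENNReal.ofReal (Real.exp (-u)) * ∫⁻ t, g t * ENNReal.ofReal (Real.exp (-t)) := by
  calc ∫⁻ t, g (t - u) * ENNReal.ofReal (Real.exp (-t))
      = ∫⁻ t, ENNReal.ofReal (Real.exp (-u))
          * (g (t - u) * ENNReal.ofReal (Real.exp (-(t - u)))) := by
        refine lintegral_congr fun t => ?_
        rw [show -t = -(t - u) + -u by ring, Real.exp_add, ENNReal.ofReal_mul (Real.exp_pos _).le]
        ring
    _ = ENNReal.ofReal (Real.exp (-u)) * ∫⁻ t, g t * ENNReal.ofReal (Real.exp (-t)) := by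
        rw [lintegral_const_mul' _ _ ENNReal.ofReal_ne_top,
          lintegral_sub_right_eq_self (fun t => g t * ENNReal.ofReal (Real.exp (-t))) u]

lemma lintegral_measure_pos_add_mul_exp_neg {Ω : Type*} [MeasurableSpace Ω] (μ : Measure Ω)
    [SFinite μ] {X : Ω → ℝ} (hX : Measurable X) :
    ∫⁻ t, μ {ω | 0 < t + X ω} * ENNReal.ofReal (Real.exp (-t))
      = ∫⁻ ω, ENNReal.ofReal (Real.exp (X ω)) ∂μ := by
  set F : ℝ → Ω → ℝ≥0∞ := fun t ω =>
    (Ioi (-X ω)).indicator (fun t => ENNReal.ofReal (Real.exp (-t))) t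
  have hF : Measurable (Function.uncurry F) :=
    (Real.measurable_exp.comp measurable_fst.neg).ennreal_ofReal.indicator
      (measurableSet_lt (hX.comp measurable_snd).neg measurable_fst)
  calc ∫⁻ t, μ {ω | 0 < t + X ω} * ENNReal.ofReal (Real.exp (-t))
      = ∫⁻ t, ∫⁻ ω, F t ω ∂μ := by
        refine lintegral_congr fun t => ?_
        have hs : MeasurableSet {ω | 0 < t + X ω} :=
          measurableSet_lt measurable_const (measurable_const.add hX)
        rw [mul_comm, ← lintegral_indicator_const hs]
        congr with ω
        simp only [F, indicator, mem_Ioi, mem_ofPred_eq, neg_lt_iff_pos_add]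
    _ = ∫⁻ ω, ∫⁻ t, F t ω ∂volume ∂μ := lintegral_lintegral_swap hF.aemeasurable
    _ = ∫⁻ ω, ENNReal.ofReal (Real.exp (X ω)) ∂μ := by
        simp only [F, lintegral_indicator measurableSet_Ioi, lintegral_exp_neg_Ioi, neg_neg]

lemma ProbabilityTheory.IndepFun.measure_mem_eq_lintegral {Ω α β : Type*} [MeasurableSpace Ω]
    [MeasurableSpace α] [MeasurableSpace β] {μ : Measure Ω} [IsFiniteMeasure μ] {X : Ω → α}
    {Y : Ω → β} (hXY : IndepFun X Y μ) (hX : Measurable X) (hY : Measurable Y)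
    {C : Set (α × β)} (hC : MeasurableSet C) :
    μ {ω | (X ω, Y ω) ∈ C} = ∫⁻ x, μ {ω | (x, Y ω) ∈ C} ∂(μ.map X) := by
  change μ ((fun ω => (X ω, Y ω)) ⁻¹' C) = _
  rw [← Measure.map_apply (hX.prodMk hY) hC,
    (indepFun_iff_map_prod_eq_prod_map_map hX.aemeasurable hY.aemeasurable).mp hXY,
    Measure.prod_apply hC]
  refine lintegral_congr fun x => ?_
  rw [Measure.map_apply hY (measurable_prodMk_left hC)]
  rfl

lemma map_eq_expMeasure_one {Ω : Type*} [MeasurableSpace Ω] {μ : Measure Ω}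
    [IsProbabilityMeasure μ] {E : Ω → ℝ} (hE : Measurable E)
    (hEexp : ∀ t : ℝ, 0 ≤ t → μ {ω | t < E ω} = ENNReal.ofReal (Real.exp (-t))) :
    μ.map E = expMeasure 1 := by
  have hle : ∀ t : ℝ, 0 ≤ t → μ (E ⁻¹' Iic t) = ENNReal.ofReal (1 - Real.exp (-t)) := by
    intro t ht
    rw [show E ⁻¹' Iic t = {ω | t < E ω}ᶜ by ext; simp,
      prob_compl_eq_one_sub (measurableSet_lt measurable_const hE), hEexp t ht,
      ENNReal.ofReal_sub _ (Real.exp_pos _).le, ENNReal.ofReal_one]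
  have := isProbabilityMeasure_expMeasure one_pos
  have := Measure.isProbabilityMeasure_map (μ := μ) hE.aemeasurable
  refine Measure.ext_of_Iic _ _ fun x => ?_
  rw [Measure.map_apply hE measurableSet_Iic, ← ofReal_cdf, cdf_expMeasure_eq one_pos, one_mul]
  split_ifs with hx
  · exact hle x hx
  · rw [ENNReal.ofReal_zero]
    refine measure_mono_null (preimage_mono (Iic_subset_Iic.mpr (not_le.mp hx).le)) ?_
    simpa using hle 0 le_rfl

lemma measurableSet_Lregion (D : ℕ) : MeasurableSet (Lregion D) :=
  measurableSet_lt measurable_const (Measurable.iSup fun j => measurable_pi_apply j)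

lemma const_add_mem_Lregion_iff {D : ℕ} [Nonempty (Fin D)] {s : Fin D → ℝ}
    (hs : ⨆ j, s j = 0) (t : ℝ) : (fun j => t + s j) ∈ Lregion D ↔ 0 < t := by
  rw [Lregion, mem_ofPred_eq, ← add_ciSup (finite_range s).bddAbove, hs, add_zero]

lemma preimage_sub_const_Lregion (D : ℕ) [Nonempty (Fin D)] (u : ℝ) :
    (fun x : Fin D → ℝ => fun j => x j - u) ⁻¹' Lregion D = {x | u < ⨆ j, x j} := by
  ext x
  rw [mem_preimage, Lregion, mem_ofPred_eq, ← ciSup_sub (finite_range x).bddAbove, sub_pos,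
    mem_ofPred_eq]

section ShiftIntegral

variable {Ω ι : Type*} [MeasurableSpace Ω] {μ : Measure Ω} {S : Ω → ι → ℝ}

/-- `m · Λ B` in the notation of the statement. -/
noncomputable def shiftIntegral (μ : Measure Ω) (S : Ω → ι → ℝ) (B : Set (ι → ℝ)) : ℝ≥0∞ :=
  ∫⁻ t, μ {ω | (fun j => t + S ω j) ∈ B} * ENNReal.ofReal (Real.exp (-t))

lemma shiftIntegral_coord_pos [SFinite μ] (hS : Measurable S) (j : ι) :
    shiftIntegral μ S {x | 0 < x j} = ∫⁻ ω, ENNReal.ofReal (Real.exp (S ω j)) ∂μ :=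
  lintegral_measure_pos_add_mul_exp_neg μ ((measurable_pi_apply j).comp hS)

lemma shiftIntegral_preimage_sub_const (B : Set (ι → ℝ)) (u : ℝ) :
    shiftIntegral μ S ((fun x j => x j - u) ⁻¹' B)
      = ENNReal.ofReal (Real.exp (-u)) * shiftIntegral μ S B := by
  have h : ∀ t, {ω | (fun j => t + S ω j) ∈ (fun x j => x j - u) ⁻¹' B}
      = {ω | (fun j => (t - u) + S ω j) ∈ B} := fun t => by
    ext ω
    simp only [mem_ofPred_eq, mem_preimage, add_sub_right_comm]
  simp only [shiftIntegral, h]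
  exact lintegral_comp_sub_mul_exp_neg (fun t => μ {ω | (fun j => t + S ω j) ∈ B}) u

end ShiftIntegral

section Lregion

variable {Ω : Type*} [MeasurableSpace Ω] {μ : Measure Ω} [IsProbabilityMeasure μ] {D : ℕ}
  [Nonempty (Fin D)] {S : Ω → Fin D → ℝ}

lemma measure_const_add_mem_Lregion (hS : ∀ᵐ ω ∂μ, ⨆ j, S ω j = 0) (t : ℝ) :
    μ {ω | (fun j => t + S ω j) ∈ Lregion D} = (Ioi 0).indicator 1 t := by
  have h : {ω | (fun j => t + S ω j) ∈ Lregion D} =ᵐ[μ] {_ω | 0 < t} := by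
    filter_upwards [hS] with ω hω
    exact propext (const_add_mem_Lregion_iff hω t)
  by_cases ht : 0 < t <;> simp [measure_congr h, ht]

lemma shiftIntegral_Lregion (hS : ∀ᵐ ω ∂μ, ⨆ j, S ω j = 0) :
    shiftIntegral μ S (Lregion D) = 1 := by
  have h : ∀ t : ℝ, (Ioi 0).indicator 1 t * ENNReal.ofReal (Real.exp (-t))
      = (Ioi 0).indicator (fun t => ENNReal.ofReal (Real.exp (-t))) t := fun t => by
    by_cases ht : 0 < t <;> simp [ht]
  simp only [shiftIntegral, measure_const_add_mem_Lregion hS, h]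
  rw [lintegral_indicator measurableSet_Ioi, lintegral_exp_neg_Ioi, neg_zero, Real.exp_zero,
    ENNReal.ofReal_one]

lemma shiftIntegral_eq_measure_add_mem {E : Ω → ℝ} (hE : Measurable E) (hS : Measurable S)
    (hlaw : μ.map E = expMeasure 1) (hindep : IndepFun E S μ)
    (hSmax : ∀ᵐ ω ∂μ, ⨆ j, S ω j = 0) {B : Set (Fin D → ℝ)} (hB : MeasurableSet B)
    (hBL : B ⊆ Lregion D) :
    shiftIntegral μ S B = μ {ω | (fun j => E ω + S ω j) ∈ B} := by
  have hC : MeasurableSet {p : ℝ × (Fin D → ℝ) | (fun j => p.1 + p.2 j) ∈ B} :=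
    (measurable_pi_lambda _ fun j =>
      measurable_fst.add ((measurable_pi_apply j).comp measurable_snd)) hB
  have hvanish : ∀ t ≤ 0, μ {ω | (fun j => t + S ω j) ∈ B} = 0 := fun t ht => by
    refine measure_mono_null (t := {ω | (fun j => t + S ω j) ∈ Lregion D})
      (fun ω hω => hBL hω) ?_
    rw [measure_const_add_mem_Lregion hSmax, indicator_of_notMem (notMem_Ioi.mpr ht)]
  symm
  refine (hindep.measure_mem_eq_lintegral hE hS hC).trans ?_
  rw [hlaw, expMeasure, gammaMeasure, lintegral_withDensity_eq_lintegral_mul_non_measurable _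
    (f := gammaPDF 1 1) (measurable_gammaPDFReal 1 1).ennreal_ofReal
    (ae_of_all _ fun _ => ENNReal.ofReal_lt_top)]
  refine lintegral_congr fun t => ?_
  rcases le_or_gt t 0 with ht | ht
  · simp [hvanish t ht]
  · rw [Pi.mul_apply, show gammaPDF 1 1 t = exponentialPDF 1 t from rfl,
      exponentialPDF_of_nonneg ht.le, mul_comm]
    simp

end Lregion

theorem stmt_11_general
    {Ω : Type*} [MeasureSpace Ω] [IsProbabilityMeasure (ℙ : Measure Ω)]
    {D : ℕ} (hD : 0 < D)
    (E : Ω → ℝ) (S : Ω → Fin D → ℝ)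
    (hEmeas : Measurable E) (hSmeas : Measurable S)
    (hEexp : ∀ t : ℝ, 0 ≤ t → ℙ {ω | t < E ω} = ENNReal.ofReal (Real.exp (-t)))
    (hindep : IndepFun E S ℙ)
    (hSmax : ∀ᵐ ω ∂ℙ, (⨆ j, S ω j) = 0)
    (m : ℝ) (hm0 : 0 < m)
    (hmS : ∀ j, ∫ ω, Real.exp (S ω j) ∂ℙ = m)
    (Λ : Measure (Fin D → ℝ))
    (hΛ : ∀ B : Set (Fin D → ℝ), MeasurableSet B →
      Λ B = ENNReal.ofReal (1 / m)
        * ∫⁻ t : ℝ, ℙ {ω | (fun j => t + S ω j) ∈ B} * ENNReal.ofReal (Real.exp (-t))) :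
    (∀ j, Λ {x | 0 < x j} = 1)
    ∧ (∀ (u : ℝ) (B : Set (Fin D → ℝ)), MeasurableSet B →
        Λ ((fun x : Fin D → ℝ => fun j => x j - u) ⁻¹' B)
          = ENNReal.ofReal (Real.exp (-u)) * Λ B)
    ∧ Λ (Lregion D) = ENNReal.ofReal (1 / m)
    ∧ (∀ B : Set (Fin D → ℝ), MeasurableSet B → B ⊆ Lregion D →
        Λ B = Λ (Lregion D) * ℙ {ω | (fun j => E ω + S ω j) ∈ B})
    ∧ (∀ u : ℝ, Λ {x | u < ⨆ j, x j} < ⊤) := by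
  have : Nonempty (Fin D) := Fin.pos_iff_nonempty.mp hD
  have hΛ' : ∀ B, MeasurableSet B → Λ B = ENNReal.ofReal (1 / m) * shiftIntegral ℙ S B := hΛ
  have hL : Λ (Lregion D) = ENNReal.ofReal (1 / m) := by
    rw [hΛ' _ (measurableSet_Lregion D), shiftIntegral_Lregion hSmax, mul_one]
  have hshift : ∀ (u : ℝ) (B : Set (Fin D → ℝ)), MeasurableSet B →
      Λ ((fun x : Fin D → ℝ => fun j => x j - u) ⁻¹' B)
        = ENNReal.ofReal (Real.exp (-u)) * Λ B := fun u B hB => by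
    rw [hΛ' _ ((measurable_pi_lambda _ fun j => (measurable_pi_apply j).sub_const u) hB),
      hΛ' B hB, shiftIntegral_preimage_sub_const, mul_left_comm]
  refine ⟨fun j => ?_, hshift, hL, fun B hB hBL => ?_, fun u => ?_⟩
  · have hint : Integrable (fun ω => Real.exp (S ω j)) ℙ :=
      .of_integral_ne_zero (by rw [hmS j]; exact hm0.ne')
    rw [hΛ' _ (measurableSet_lt measurable_const (measurable_pi_apply j)),
      shiftIntegral_coord_pos hSmeas, ← ofReal_integral_eq_lintegral_ofReal hint
        (ae_of_all _ fun ω => (Real.exp_pos _).le), hmS j, ← ENNReal.ofReal_mul (by positivity),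
      one_div_mul_cancel hm0.ne', ENNReal.ofReal_one]
  · rw [hΛ' B hB, hL, shiftIntegral_eq_measure_add_mem hEmeas hSmeas
      (map_eq_expMeasure_one hEmeas hEexp) hindep hSmax hB hBL]
  · rw [← preimage_sub_const_Lregion, hshift u _ (measurableSet_Lregion D), hL]
    exact ENNReal.mul_lt_top ENNReal.ofReal_lt_top ENNReal.ofReal_lt_top

/-- From MGP distributions to exponent measures. Let `Z j = E + S j`
be a standard MGP vector with balanced margins `𝔼[exp (S j)] = m ∈ (0,1]` for all `j`,
and let `Λ` be the Borel measure on `ℝ^D` defined by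
`Λ B = (1/m) ∫ P(t·1 + S ∈ B) exp (−t) dt`. Then (a) `Λ {x_j > 0} = 1` for all `j`;
(b) `Λ (B + u·1) = exp (−u) Λ B`; (c) `Λ L = 1/m`; (d) `Λ B = Λ L · P(Z ∈ B)` for
Borel `B ⊆ L`; and `Λ {max_j x_j > u} < ∞` for all real `u`. In particular `Λ` is an
exponent measure on unit-exponential scale whose normalized restriction to `L` is the
law of `Z`. -/
theorem stmt_11
    {Ω : Type*} [MeasureSpace Ω] [IsProbabilityMeasure (ℙ : Measure Ω)]
    {D : ℕ} (hD : 0 < D)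
    (E : Ω → ℝ) (S : Ω → Fin D → ℝ)
    (hEmeas : Measurable E) (hSmeas : Measurable S)
    (hEexp : ∀ t : ℝ, 0 ≤ t → ℙ {ω | t < E ω} = ENNReal.ofReal (Real.exp (-t)))
    (hindep : IndepFun E S ℙ)
    (hSle : ∀ j, ∀ᵐ ω ∂ℙ, S ω j ≤ 0)
    (hSmax : ∀ᵐ ω ∂ℙ, (⨆ j, S ω j) = 0)
    (m : ℝ) (hm0 : 0 < m) (hm1 : m ≤ 1)
    (hmS : ∀ j, ∫ ω, Real.exp (S ω j) ∂ℙ = m)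
    (Λ : Measure (Fin D → ℝ))
    (hΛ : ∀ B : Set (Fin D → ℝ), MeasurableSet B →
      Λ B = ENNReal.ofReal (1 / m)
        * ∫⁻ t : ℝ, ℙ {ω | (fun j => t + S ω j) ∈ B} * ENNReal.ofReal (Real.exp (-t))) :
    (∀ j, Λ {x | 0 < x j} = 1)
    ∧ (∀ (u : ℝ) (B : Set (Fin D → ℝ)), MeasurableSet B →
        Λ ((fun x : Fin D → ℝ => fun j => x j - u) ⁻¹' B)
          = ENNReal.ofReal (Real.exp (-u)) * Λ B)
    ∧ Λ (Lregion D) = ENNReal.ofReal (1 / m)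
    ∧ (∀ B : Set (Fin D → ℝ), MeasurableSet B → B ⊆ Lregion D →
        Λ B = Λ (Lregion D) * ℙ {ω | (fun j => E ω + S ω j) ∈ B})
    ∧ (∀ u : ℝ, Λ {x | u < ⨆ j, x j} < ⊤) :=
  stmt_11_general hD E S hEmeas hSmeas hEexp hindep hSmax m hm0 hmS Λ hΛ
end

section
/- (MGP limit for common-shock constructions X = E + U.) Let E be a unit-exponential random variable and let U = (U_1,…,U_D) be a random vector in ℝ^D, independent of E, such that 𝔼[exp(Q)] < ∞ where Q = max_j U_j. Define X = (X_1,…,X_D) by X_j = E + U_j. Then for every x ∈ ℝ^D: lim_{u→∞} P( X_j ≤ u + x_j for all j | max_j X_j > u ) = 𝔼[ ( exp(Q) − exp(−min_j(x_j − U_j)) )⁺ ] / 𝔼[ exp(Q) ], where (·)⁺ denotes the positive part. (This limit is the distribution function of the standard MGP vector whose generator S is obtained from U via the paper's transformation P(S ≤ s) = 𝔼[exp(Q)·1{U ≤ s + Q·1}]/𝔼[exp(Q)].) -/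
/-!
Conditioning on `max_j X_j > u` means `E > u - Q`, and the event `∀ j, X_j ≤ u + x_j` means
`E ≤ u + m` with `m = min_j (x_j - U_j)`. Integrating the exponential tail `P(E > t) = e^{-t⁺}`
against the law of `U` gives `P(max X > u) = 𝔼[e^{-(u-Q)⁺}]` and
`P(X ≤ u + x, max X > u) = 𝔼[(e^{-(u-Q)⁺} - e^{-(u+m)⁺})⁺]`. After multiplication by `e^u`
both integrands are dominated by `e^Q` and are eventually equal to `e^Q` and
`(e^Q - e^{-m})⁺`, so dominated convergence gives the limits of numerator and denominator.
-/

open MeasureTheory ProbabilityTheory Filter Set Real Topology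

noncomputable def expTail (t : ℝ) : ℝ := exp (-max t 0)

lemma expTail_nonneg (t : ℝ) : 0 ≤ expTail t := (exp_pos _).le

lemma expTail_of_nonneg {t : ℝ} (ht : 0 ≤ t) : expTail t = exp (-t) := by
  rw [expTail, max_eq_left ht]

lemma expTail_of_nonpos {t : ℝ} (ht : t ≤ 0) : expTail t = 1 := by
  rw [expTail, max_eq_right ht, neg_zero, exp_zero]

lemma expTail_antitone : Antitone expTail := fun _ _ h =>
  exp_le_exp.2 (neg_le_neg (max_le_max_right 0 h))

@[fun_prop]
lemma measurable_expTail : Measurable expTail := by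
  unfold expTail; fun_prop

lemma exp_mul_expTail_le (u t : ℝ) : exp u * expTail t ≤ exp (u - t) := by
  rw [expTail, ← exp_add]
  exact exp_le_exp.2 (by linarith [le_max_left t 0])

lemma exp_mul_expTail_of_nonneg (u : ℝ) {t : ℝ} (ht : 0 ≤ t) :
    exp u * expTail t = exp (u - t) := by
  rw [expTail_of_nonneg ht, ← exp_add, sub_eq_add_neg]

section ExponentialLaw

variable {ν : Measure ℝ} [IsProbabilityMeasure ν]

lemma measure_Ioi_eq_ofReal_expTail (hν : ∀ t, 0 ≤ t → ν (Ioi t) = ENNReal.ofReal (exp (-t)))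
    (t : ℝ) : ν (Ioi t) = ENNReal.ofReal (expTail t) := by
  rcases le_total 0 t with ht | ht
  · rw [hν t ht, expTail_of_nonneg ht]
  · rw [expTail_of_nonpos ht, ENNReal.ofReal_one]
    refine le_antisymm prob_le_one ?_
    calc (1 : ENNReal) = ν (Ioi 0) := by simp [hν 0 le_rfl]
      _ ≤ ν (Ioi t) := measure_mono (Ioi_subset_Ioi ht)

lemma measure_Ioc_eq_ofReal_expTail_sub
    (hν : ∀ t, 0 ≤ t → ν (Ioi t) = ENNReal.ofReal (exp (-t))) (a b : ℝ) :
    ν (Ioc a b) = ENNReal.ofReal (expTail a - expTail b) := by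
  rcases le_total a b with hab | hab
  · rw [← Ioi_sdiff_Ioi, measure_sdiff (Ioi_subset_Ioi hab) measurableSet_Ioi.nullMeasurableSet
      (measure_ne_top _ _), measure_Ioi_eq_ofReal_expTail hν, measure_Ioi_eq_ofReal_expTail hν,
      ENNReal.ofReal_sub _ (expTail_nonneg b)]
  · rw [Ioc_eq_empty hab.not_gt, measure_empty,
      ENNReal.ofReal_of_nonpos (sub_nonpos.2 (expTail_antitone hab))]

end ExponentialLaw

lemma measure_setOf_mem_eq_lintegral_of_indepFun {Ω β γ : Type*} {mΩ : MeasurableSpace Ω}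
    {μ : Measure Ω} [IsFiniteMeasure μ] [MeasurableSpace β] [MeasurableSpace γ]
    {E : Ω → γ} {V : Ω → β} (hE : Measurable E) (hV : Measurable V) (hEV : IndepFun E V μ)
    {f : β → Set γ} (hf : MeasurableSet {p : β × γ | p.2 ∈ f p.1}) :
    μ {ω | E ω ∈ f (V ω)} = ∫⁻ ω, μ.map E (f (V ω)) ∂μ := by
  have hprod : μ.map (fun ω => (V ω, E ω)) = (μ.map V).prod (μ.map E) :=
    (indepFun_iff_map_prod_eq_prod_map_map hV.aemeasurable hE.aemeasurable).1 hEV.symm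
  calc μ {ω | E ω ∈ f (V ω)} = μ.map (fun ω => (V ω, E ω)) {p | p.2 ∈ f p.1} :=
        (Measure.map_apply (hV.prodMk hE) hf).symm
    _ = ∫⁻ ω, μ.map E (f (V ω)) ∂μ := by
        rw [hprod, Measure.prod_apply hf, lintegral_map (measurable_measure_prodMk_left hf) hV]
        rfl

lemma lt_ciSup_const_add_iff {ι : Type*} [Finite ι] [Nonempty ι] {a b : ℝ} {v : ι → ℝ} :
    b < ⨆ j, (a + v j) ↔ b - ⨆ j, v j < a := by
  rw [lt_ciSup_iff (finite_range _).bddAbove, sub_lt_comm, lt_ciSup_iff (finite_range _).bddAbove]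
  simp only [sub_lt_iff_lt_add']

lemma forall_add_le_add_iff_le_add_ciInf {ι : Type*} [Finite ι] [Nonempty ι] {a b : ℝ}
    {v x : ι → ℝ} : (∀ j, a + v j ≤ b + x j) ↔ a ≤ b + ⨅ j, (x j - v j) := by
  rw [← sub_le_iff_le_add', le_ciInf_iff (finite_range _).bddBelow]
  exact forall_congr' fun j => ⟨fun h => by linarith, fun h => by linarith⟩

lemma toReal_lintegral_ofReal {α : Type*} {mα : MeasurableSpace α} {μ : Measure α} {f : α → ℝ}
    (hf : AEMeasurable f μ) :
    (∫⁻ a, ENNReal.ofReal (f a) ∂μ).toReal = ∫ a, max (f a) 0 ∂μ := by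
  rw [← integral_toReal hf.ennreal_ofReal (ae_of_all _ fun _ => ENNReal.ofReal_lt_top)]
  rfl

section ExponentialShock

variable {Ω β : Type*} {mΩ : MeasurableSpace Ω} [MeasurableSpace β] {μ : Measure Ω}
  [IsProbabilityMeasure μ] {E : Ω → ℝ} {V : Ω → β} {a b : β → ℝ}

lemma toReal_cond_eq_integral_div_integral_expTail (hE : Measurable E) (hV : Measurable V)
    (hEV : IndepFun E V μ) (hEexp : ∀ t, 0 ≤ t → μ {ω | t < E ω} = ENNReal.ofReal (exp (-t)))
    (ha : Measurable a) (hb : Measurable b) :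
    (μ[{ω | E ω ≤ b (V ω)} | {ω | a (V ω) < E ω}]).toReal =
      (∫ ω, max (expTail (a (V ω)) - expTail (b (V ω))) 0 ∂μ) / ∫ ω, expTail (a (V ω)) ∂μ := by
  have : IsProbabilityMeasure (μ.map E) := Measure.isProbabilityMeasure_map hE.aemeasurable
  have hν : ∀ t, 0 ≤ t → μ.map E (Ioi t) = ENNReal.ofReal (exp (-t)) := fun t ht => by
    rw [Measure.map_apply hE measurableSet_Ioi]
    exact hEexp t ht
  have hden : μ {ω | a (V ω) < E ω} = ∫⁻ ω, ENNReal.ofReal (expTail (a (V ω))) ∂μ := by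
    simpa only [mem_Ioi, measure_Ioi_eq_ofReal_expTail hν] using
      measure_setOf_mem_eq_lintegral_of_indepFun (f := fun v => Ioi (a v)) hE hV hEV
        (measurableSet_lt (by fun_prop) measurable_snd)
  have hnum : μ ({ω | a (V ω) < E ω} ∩ {ω | E ω ≤ b (V ω)}) =
      ∫⁻ ω, ENNReal.ofReal (expTail (a (V ω)) - expTail (b (V ω))) ∂μ := by
    simpa only [mem_Ioc, ofPred_and, measure_Ioc_eq_ofReal_expTail_sub hν] using
      measure_setOf_mem_eq_lintegral_of_indepFun (f := fun v => Ioc (a v) (b v)) hE hV hEV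
        ((measurableSet_lt (by fun_prop) measurable_snd).inter
          (measurableSet_le measurable_snd (by fun_prop)))
  have hA : MeasurableSet {ω | a (V ω) < E ω} := measurableSet_lt (ha.comp hV) hE
  rw [cond_apply hA, ENNReal.toReal_mul, ENNReal.toReal_inv, hnum,
    hden, toReal_lintegral_ofReal (by fun_prop), toReal_lintegral_ofReal (by fun_prop),
    inv_mul_eq_div]
  simp only [max_eq_left (expTail_nonneg _)]

end ExponentialShock

section Limits

variable {Ω : Type*} {mΩ : MeasurableSpace Ω} {μ : Measure Ω} {Q m : Ω → ℝ}

lemma tendsto_exp_mul_integral_expTail_sub (hQ : Measurable Q)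
    (hint : Integrable (fun ω => exp (Q ω)) μ) :
    Tendsto (fun u => exp u * ∫ ω, expTail (u - Q ω) ∂μ) atTop (𝓝 (∫ ω, exp (Q ω) ∂μ)) := by
  simp_rw [← integral_const_mul]
  refine tendsto_integral_filter_of_dominated_convergence _
    (Eventually.of_forall fun u => ?_) (Eventually.of_forall fun u => ae_of_all _ fun ω => ?_)
    hint (ae_of_all _ fun ω => ?_)
  · exact Measurable.aestronglyMeasurable (by fun_prop)
  · rw [norm_of_nonneg (mul_nonneg (exp_pos u).le (expTail_nonneg _))]
    simpa using exp_mul_expTail_le u (u - Q ω)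
  · refine tendsto_const_nhds.congr' ?_
    filter_upwards [eventually_ge_atTop (Q ω)] with u hu
    rw [exp_mul_expTail_of_nonneg u (sub_nonneg.2 hu), sub_sub_cancel]

lemma tendsto_exp_mul_integral_expTail_sub_sub (hQ : Measurable Q) (hm : Measurable m)
    (hint : Integrable (fun ω => exp (Q ω)) μ) :
    Tendsto (fun u => exp u * ∫ ω, max (expTail (u - Q ω) - expTail (u + m ω)) 0 ∂μ) atTop
      (𝓝 (∫ ω, max (exp (Q ω) - exp (-m ω)) 0 ∂μ)) := by
  simp_rw [← integral_const_mul]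
  refine tendsto_integral_filter_of_dominated_convergence _
    (Eventually.of_forall fun u => ?_) (Eventually.of_forall fun u => ae_of_all _ fun ω => ?_)
    hint (ae_of_all _ fun ω => ?_)
  · exact Measurable.aestronglyMeasurable (by fun_prop)
  · rw [norm_of_nonneg (mul_nonneg (exp_pos u).le (le_max_right _ _))]
    calc exp u * max (expTail (u - Q ω) - expTail (u + m ω)) 0
        ≤ exp u * expTail (u - Q ω) := mul_le_mul_of_nonneg_left
          (max_le (sub_le_self _ (expTail_nonneg _)) (expTail_nonneg _)) (exp_pos u).le
      _ ≤ exp (Q ω) := by simpa using exp_mul_expTail_le u (u - Q ω)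
  · refine tendsto_const_nhds.congr' ?_
    filter_upwards [eventually_ge_atTop (Q ω), eventually_ge_atTop (-m ω)] with u hQu hmu
    rw [mul_max_of_nonneg _ _ (exp_pos u).le, mul_zero, mul_sub,
      exp_mul_expTail_of_nonneg u (sub_nonneg.2 hQu), sub_sub_cancel,
      exp_mul_expTail_of_nonneg u (by linarith : 0 ≤ u + m ω), sub_add_cancel_left]

end Limits

/-- MGP limit for common-shock constructions `X = E + U`. Let `E` be
unit-exponential, independent of `U = (U_1,…,U_D)`, with `Q = max_j U_j` satisfying
`𝔼[exp Q] < ∞`, and let `X_j = E + U_j`. Then for every `x ∈ ℝ^D`,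
`P(∀ j, X_j ≤ u + x_j | max_j X_j > u) → 𝔼[(exp Q − exp (−min_j (x_j − U_j)))⁺]/𝔼[exp Q]`
as `u → ∞`: the limit is the distribution function of the standard MGP vector generated
by `U`. -/
theorem stmt_19
    {Ω : Type*} [MeasureSpace Ω] [IsProbabilityMeasure (ℙ : Measure Ω)]
    {D : ℕ} (hD : 0 < D)
    (E : Ω → ℝ) (U : Ω → Fin D → ℝ)
    (hEmeas : Measurable E) (hUmeas : Measurable U)
    (hEexp : ∀ t : ℝ, 0 ≤ t → ℙ {ω | t < E ω} = ENNReal.ofReal (Real.exp (-t)))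
    (hindep : IndepFun E U ℙ)
    (Q : Ω → ℝ) (hQ : ∀ ω, Q ω = ⨆ j, U ω j)
    (hQint : Integrable (fun ω => Real.exp (Q ω)) ℙ) :
    ∀ x : Fin D → ℝ,
      Tendsto
        (fun u : ℝ =>
          (ℙ[{ω | ∀ j, E ω + U ω j ≤ u + x j} | {ω | u < ⨆ j, (E ω + U ω j)}]).toReal)
        atTop
        (nhds ((∫ ω, max (Real.exp (Q ω) - Real.exp (-(⨅ j, (x j - U ω j)))) 0 ∂ℙ)
          / ∫ ω, Real.exp (Q ω) ∂ℙ)) := by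
  intro x
  obtain rfl : Q = fun ω => ⨆ j, U ω j := funext hQ
  have : Nonempty (Fin D) := ⟨⟨0, hD⟩⟩
  have hsup : Measurable fun v : Fin D → ℝ => ⨆ j, v j := .iSup measurable_pi_apply
  have hinf : Measurable fun v : Fin D → ℝ => ⨅ j, (x j - v j) :=
    .iInf fun j => measurable_const.sub (measurable_pi_apply j)
  have hcond : ∀ u,
      (ℙ[{ω | ∀ j, E ω + U ω j ≤ u + x j} | {ω | u < ⨆ j, (E ω + U ω j)}]).toReal =
        (exp u * ∫ ω, max (expTail (u - ⨆ j, U ω j) - expTail (u + ⨅ j, (x j - U ω j))) 0) /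
          (exp u * ∫ ω, expTail (u - ⨆ j, U ω j)) := fun u => by
    simp only [lt_ciSup_const_add_iff, forall_add_le_add_iff_le_add_ciInf]
    have h := toReal_cond_eq_integral_div_integral_expTail (a := fun v => u - ⨆ j, v j)
      (b := fun v => u + ⨅ j, (x j - v j)) hEmeas hUmeas hindep hEexp
      (measurable_const.sub hsup) (measurable_const.add hinf)
    rwa [mul_div_mul_left _ _ (exp_pos u).ne']
  have hQm : Measurable fun ω => ⨆ j, U ω j := hsup.comp hUmeas
  simp only [hcond]
  exact (tendsto_exp_mul_integral_expTail_sub_sub hQm (hinf.comp hUmeas) hQint).div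
    (tendsto_exp_mul_integral_expTail_sub hQm hQint) (integral_exp_pos hQint).ne'
end
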